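/- arXiv:1701.00477 — 6 statements merged into one kernel-verified Lean document; each statement's English description precedes it below -/
import Mathlib

section
/- Let φ be continuous on a compact interval [a,b] and r>0, with E_r = {t ∈ [a,b] : r/2 ≤ |φ(t)| ≤ r} nonempty. Then the collection {I_t : t ∈ E_r} (as defined in the context) is a finite set of pairwise disjoint intervals covering E_r. -/
open Set Classical

/-- The "stopping set" to the left of `t`: points of `[a,t]` where `|φ|` leaves `(r/4, 2r)`. -/
def badL (φ : ℝ → ℝ) (a r t : ℝ) : Set ℝ :=
  {s ∈ Set.Icc a t | |φ s| ≤ r / 4 ∨ 2 * r ≤ |φ s|}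

/-- The "stopping set" to the right of `t`. -/
def badR (φ : ℝ → ℝ) (b r t : ℝ) : Set ℝ :=
  {s ∈ Set.Icc t b | |φ s| ≤ r / 4 ∨ 2 * r ≤ |φ s|}

/-- `a_t`: the supremum of the left stopping set, or `a` if it is empty. -/
noncomputable def leftStop (φ : ℝ → ℝ) (a r t : ℝ) : ℝ :=
  if (badL φ a r t).Nonempty then sSup (badL φ a r t) else a

/-- `b_t`: the infimum of the right stopping set, or `b` if it is empty. -/
noncomputable def rightStop (φ : ℝ → ℝ) (b r t : ℝ) : ℝ :=
  if (badR φ b r t).Nonempty then sInf (badR φ b r t) else b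

/-- The interval `I_t = (a_t, b_t)`, closed at an endpoint when that endpoint equals `a`
(resp. `b`). -/
noncomputable def It (φ : ℝ → ℝ) (a b r t : ℝ) : Set ℝ :=
  {s : ℝ |
    (if leftStop φ a r t = a then leftStop φ a r t ≤ s else leftStop φ a r t < s) ∧
    (if rightStop φ b r t = b then s ≤ rightStop φ b r t else s < rightStop φ b r t)}

/-- `E_r = {t ∈ [a,b] : r/2 ≤ |φ(t)| ≤ r}`. -/
def Er (φ : ℝ → ℝ) (a b r : ℝ) : Set ℝ :=
  {t ∈ Set.Icc a b | r / 2 ≤ |φ t| ∧ |φ t| ≤ r}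

/-- `N(r; φ)`: the number of distinct intervals `I_t`, `t ∈ E_r`. -/
noncomputable def Ncount (φ : ℝ → ℝ) (a b r : ℝ) : ℕ :=
  (It φ a b r '' Er φ a b r).ncard

/-!
No stopping point lies strictly between `a_t` and `b_t`, while `a_t` and `b_t` are themselves
stopping points unless they equal `a` or `b` (the stopping sets are closed). Hence two intervals
`I_t` that meet have the same endpoints and coincide. Each `I_t` is relatively open in `[a,b]`,
so `t ↦ I_t` is locally constant on the compact set `E_r` and takes only finitely many values.
-/

open Filter Topology

section Stops

variable {φ : ℝ → ℝ} {a b r t u : ℝ}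

lemma isClosed_badL (hφ : ContinuousOn φ (Icc a t)) : IsClosed (badL φ a r t) :=
  hφ.abs.preimage_isClosed_of_isClosed isClosed_Icc (isClosed_Iic.union isClosed_Ici)

lemma isClosed_badR (hφ : ContinuousOn φ (Icc t b)) : IsClosed (badR φ b r t) :=
  hφ.abs.preimage_isClosed_of_isClosed isClosed_Icc (isClosed_Iic.union isClosed_Ici)

lemma bddAbove_badL : BddAbove (badL φ a r t) :=
  bddAbove_Icc.mono fun _ hs => hs.1

lemma bddBelow_badR : BddBelow (badR φ b r t) :=
  bddBelow_Icc.mono fun _ hs => hs.1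

lemma le_leftStop (hu : u ∈ badL φ a r t) : u ≤ leftStop φ a r t := by
  rw [leftStop, if_pos ⟨u, hu⟩]
  exact le_csSup bddAbove_badL hu

lemma rightStop_le (hu : u ∈ badR φ b r t) : rightStop φ b r t ≤ u := by
  rw [rightStop, if_pos ⟨u, hu⟩]
  exact csInf_le bddBelow_badR hu

lemma left_le_leftStop : a ≤ leftStop φ a r t := by
  by_cases h : (badL φ a r t).Nonempty
  · obtain ⟨u, hu⟩ := h
    exact hu.1.1.trans (le_leftStop hu)
  · rw [leftStop, if_neg h]

lemma rightStop_le_right : rightStop φ b r t ≤ b := by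
  by_cases h : (badR φ b r t).Nonempty
  · obtain ⟨u, hu⟩ := h
    exact (rightStop_le hu).trans hu.1.2
  · rw [rightStop, if_neg h]

lemma leftStop_le (hat : a ≤ t) : leftStop φ a r t ≤ t := by
  by_cases h : (badL φ a r t).Nonempty
  · rw [leftStop, if_pos h]
    exact csSup_le h fun _ hu => hu.1.2
  · rwa [leftStop, if_neg h]

lemma le_rightStop (htb : t ≤ b) : t ≤ rightStop φ b r t := by
  by_cases h : (badR φ b r t).Nonempty
  · rw [rightStop, if_pos h]
    exact le_csInf h fun _ hu => hu.1.1
  · rwa [rightStop, if_neg h]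

lemma leftStop_mem_badL (hφ : ContinuousOn φ (Icc a t)) (h : leftStop φ a r t ≠ a) :
    leftStop φ a r t ∈ badL φ a r t := by
  have hne : (badL φ a r t).Nonempty := by
    by_contra hne
    exact h (if_neg hne)
  rw [leftStop, if_pos hne]
  exact (isClosed_badL hφ).csSup_mem hne bddAbove_badL

lemma rightStop_mem_badR (hφ : ContinuousOn φ (Icc t b)) (h : rightStop φ b r t ≠ b) :
    rightStop φ b r t ∈ badR φ b r t := by
  have hne : (badR φ b r t).Nonempty := by
    by_contra hne
    exact h (if_neg hne)
  rw [rightStop, if_pos hne]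
  exact (isClosed_badR hφ).csInf_mem hne bddBelow_badR

lemma not_bad_of_mem_Ioo (hu : u ∈ Ioo (leftStop φ a r t) (rightStop φ b r t)) :
    ¬(|φ u| ≤ r / 4 ∨ 2 * r ≤ |φ u|) := by
  intro hbad
  rcases le_total u t with hut | htu
  · have hmem : u ∈ badL φ a r t := ⟨⟨left_le_leftStop.trans hu.1.le, hut⟩, hbad⟩
    exact (le_leftStop hmem).not_gt hu.1
  · have hmem : u ∈ badR φ b r t := ⟨⟨htu, hu.2.le.trans rightStop_le_right⟩, hbad⟩
    exact (rightStop_le hmem).not_gt hu.2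

end Stops

section Intervals

variable {φ : ℝ → ℝ} {a b r t t₁ t₂ s : ℝ}

lemma leftStop_le_of_mem_It (hs : s ∈ It φ a b r t) : leftStop φ a r t ≤ s := by
  have h := hs.1
  split_ifs at h
  exacts [h, h.le]

lemma le_rightStop_of_mem_It (hs : s ∈ It φ a b r t) : s ≤ rightStop φ b r t := by
  have h := hs.2
  split_ifs at h
  exacts [h, h.le]

lemma leftStop_lt_of_mem_It (hs : s ∈ It φ a b r t) (h : leftStop φ a r t ≠ a) :
    leftStop φ a r t < s := by
  simpa only [if_neg h] using hs.1

lemma lt_rightStop_of_mem_It (hs : s ∈ It φ a b r t) (h : rightStop φ b r t ≠ b) :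
    s < rightStop φ b r t := by
  simpa only [if_neg h] using hs.2

lemma mem_It_of_mem_Icc (hs : s ∈ Icc a b)
    (hL : leftStop φ a r t ≠ a → leftStop φ a r t < s)
    (hR : rightStop φ b r t ≠ b → s < rightStop φ b r t) : s ∈ It φ a b r t := by
  constructor
  · split_ifs with h
    exacts [h.le.trans hs.1, hL h]
  · split_ifs with h
    exacts [hs.2.trans h.ge, hR h]

lemma It_mem_nhdsWithin (hs : s ∈ It φ a b r t) : It φ a b r t ∈ 𝓝[Icc a b] s := by
  have hL : ∀ᶠ s' in 𝓝[Icc a b] s, leftStop φ a r t ≠ a → leftStop φ a r t < s' := by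
    by_cases h : leftStop φ a r t = a
    · exact Eventually.of_forall fun _ h' => absurd h h'
    · exact nhdsWithin_le_nhds <|
        (eventually_gt_nhds (leftStop_lt_of_mem_It hs h)).mono fun _ hs' _ => hs'
  have hR : ∀ᶠ s' in 𝓝[Icc a b] s, rightStop φ b r t ≠ b → s' < rightStop φ b r t := by
    by_cases h : rightStop φ b r t = b
    · exact Eventually.of_forall fun _ h' => absurd h h'
    · exact nhdsWithin_le_nhds <|
        (eventually_lt_nhds (lt_rightStop_of_mem_It hs h)).mono fun _ hs' _ => hs'
  filter_upwards [self_mem_nhdsWithin, hL, hR] with s' hs' hL' hR'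
  exact mem_It_of_mem_Icc hs' hL' hR'

lemma leftStop_le_of_mem_It_of_mem_It (hφ : ContinuousOn φ (Icc a t₂))
    (hs₁ : s ∈ It φ a b r t₁) (hs₂ : s ∈ It φ a b r t₂) :
    leftStop φ a r t₂ ≤ leftStop φ a r t₁ := by
  by_contra! hlt
  have hne : leftStop φ a r t₂ ≠ a := (left_le_leftStop.trans_lt hlt).ne'
  exact not_bad_of_mem_Ioo
    ⟨hlt, (leftStop_lt_of_mem_It hs₂ hne).trans_le (le_rightStop_of_mem_It hs₁)⟩
    (leftStop_mem_badL hφ hne).2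

lemma rightStop_le_of_mem_It_of_mem_It (hφ : ContinuousOn φ (Icc t₂ b))
    (hs₁ : s ∈ It φ a b r t₁) (hs₂ : s ∈ It φ a b r t₂) :
    rightStop φ b r t₁ ≤ rightStop φ b r t₂ := by
  by_contra! hlt
  have hne : rightStop φ b r t₂ ≠ b := (hlt.trans_le rightStop_le_right).ne
  exact not_bad_of_mem_Ioo
    ⟨(leftStop_le_of_mem_It hs₁).trans_lt (lt_rightStop_of_mem_It hs₂ hne), hlt⟩
    (rightStop_mem_badR hφ hne).2

lemma It_eq_of_mem_It_of_mem_It (hφ : ContinuousOn φ (Icc a b)) (ht₁ : t₁ ∈ Icc a b)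
    (ht₂ : t₂ ∈ Icc a b) (hs₁ : s ∈ It φ a b r t₁) (hs₂ : s ∈ It φ a b r t₂) :
    It φ a b r t₁ = It φ a b r t₂ := by
  have hL : leftStop φ a r t₁ = leftStop φ a r t₂ := le_antisymm
    (leftStop_le_of_mem_It_of_mem_It (hφ.mono (Icc_subset_Icc_right ht₁.2)) hs₂ hs₁)
    (leftStop_le_of_mem_It_of_mem_It (hφ.mono (Icc_subset_Icc_right ht₂.2)) hs₁ hs₂)
  have hR : rightStop φ b r t₁ = rightStop φ b r t₂ := le_antisymm
    (rightStop_le_of_mem_It_of_mem_It (hφ.mono (Icc_subset_Icc_left ht₂.1)) hs₁ hs₂)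
    (rightStop_le_of_mem_It_of_mem_It (hφ.mono (Icc_subset_Icc_left ht₁.1)) hs₂ hs₁)
  simp only [It, hL, hR]

lemma mem_It_self (hr : 0 < r) (hφ : ContinuousOn φ (Icc a b)) (ht : t ∈ Er φ a b r) :
    t ∈ It φ a b r t := by
  obtain ⟨htab, hlow, hhigh⟩ := ht
  have hgood : ¬(|φ t| ≤ r / 4 ∨ 2 * r ≤ |φ t|) := by
    rintro (h | h) <;> linarith
  refine mem_It_of_mem_Icc htab (fun h => (leftStop_le htab.1).lt_of_ne fun heq => hgood ?_)
    (fun h => (le_rightStop htab.2).lt_of_ne fun heq => hgood ?_)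
  · exact heq ▸ (leftStop_mem_badL (hφ.mono (Icc_subset_Icc_right htab.2)) h).2
  · exact heq ▸ (rightStop_mem_badR (hφ.mono (Icc_subset_Icc_left htab.1)) h).2

lemma isCompact_Er (hφ : ContinuousOn φ (Icc a b)) : IsCompact (Er φ a b r) :=
  isCompact_Icc.of_isClosed_subset
    (hφ.abs.preimage_isClosed_of_isClosed isClosed_Icc isClosed_Icc) (sep_subset _ _)

lemma isLocallyConstant_It (hr : 0 < r) (hφ : ContinuousOn φ (Icc a b)) :
    IsLocallyConstant fun t : Er φ a b r => It φ a b r t := by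
  refine (IsLocallyConstant.iff_eventually_eq _).2 fun t =>
    (eventually_nhds_subtype_iff _ t (It φ a b r · = It φ a b r t)).2 ?_
  have hnhds : It φ a b r t ∈ 𝓝[Er φ a b r] (t : ℝ) :=
    nhdsWithin_mono _ (sep_subset _ _) (It_mem_nhdsWithin (mem_It_self hr hφ t.2))
  filter_upwards [self_mem_nhdsWithin, hnhds] with t' ht' hmem
  exact It_eq_of_mem_It_of_mem_It hφ ht'.1 t.2.1 (mem_It_self hr hφ ht') hmem

lemma finite_image_It (hr : 0 < r) (hφ : ContinuousOn φ (Icc a b)) :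
    (It φ a b r '' Er φ a b r).Finite := by
  have := isCompact_iff_compactSpace.mp (isCompact_Er (r := r) hφ)
  rw [image_eq_range]
  exact (isLocallyConstant_It hr hφ).range_finite

end Intervals

theorem It_family_finite_disjoint_cover_general (a b r : ℝ) (hr : 0 < r) (φ : ℝ → ℝ)
    (hφ : ContinuousOn φ (Set.Icc a b)) :
    (It φ a b r '' Er φ a b r).Finite ∧
    (∀ t₁ ∈ Er φ a b r, ∀ t₂ ∈ Er φ a b r,
      It φ a b r t₁ = It φ a b r t₂ ∨ It φ a b r t₁ ∩ It φ a b r t₂ = ∅) ∧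
    Er φ a b r ⊆ ⋃ t ∈ Er φ a b r, It φ a b r t := by
  refine ⟨finite_image_It hr hφ, fun t₁ ht₁ t₂ ht₂ => ?_,
    fun t ht => mem_biUnion ht (mem_It_self hr hφ ht)⟩
  rcases eq_empty_or_nonempty (It φ a b r t₁ ∩ It φ a b r t₂) with h | ⟨s, hs₁, hs₂⟩
  · exact Or.inr h
  · exact Or.inl (It_eq_of_mem_It_of_mem_It hφ ht₁.1 ht₂.1 hs₁ hs₂)

/-- if `E_r ≠ ∅`, the collection `{I_t : t ∈ E_r}` is a finite set of pairwise
disjoint intervals covering `E_r`. -/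
theorem It_family_finite_disjoint_cover (a b r : ℝ) (hab : a ≤ b) (hr : 0 < r) (φ : ℝ → ℝ)
    (hφ : ContinuousOn φ (Set.Icc a b)) (hE : (Er φ a b r).Nonempty) :
    (It φ a b r '' Er φ a b r).Finite ∧
    (∀ t₁ ∈ Er φ a b r, ∀ t₂ ∈ Er φ a b r,
      It φ a b r t₁ = It φ a b r t₂ ∨ It φ a b r t₁ ∩ It φ a b r t₂ = ∅) ∧
    Er φ a b r ⊆ ⋃ t ∈ Er φ a b r, It φ a b r t :=
  It_family_finite_disjoint_cover_general a b r hr φ hφ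
end

section
/- Let φ ∈ C¹[0,1] and let N(r;φ) denote the number of distinct intervals in the collection {I_t : t ∈ E_r} associated to φ and r (with N(r;φ)=0 if E_r is empty). If N(r;φ) ≥ 𝒩 for some 𝒩 ≥ 20, then N((𝒩/8)·r ; φ′) ≥ 𝒩/16. -/
open Set Classical

/-! ### Generic structure lemmas -/

def IsBad (ψ : ℝ → ℝ) (ρ s : ℝ) : Prop := |ψ s| ≤ ρ / 4 ∨ 2 * ρ ≤ |ψ s|

section Generic

variable {ψ : ℝ → ℝ} {ρ : ℝ}

lemma badL_eq (t : ℝ) : badL ψ 0 ρ t = {s ∈ Set.Icc 0 t | IsBad ψ ρ s} := rfl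
lemma badR_eq (t : ℝ) : badR ψ 1 ρ t = {s ∈ Set.Icc t 1 | IsBad ψ ρ s} := rfl

lemma not_isBad_of_band (hρ : 0 < ρ) {s : ℝ} (h1 : ρ / 2 ≤ |ψ s|) (h2 : |ψ s| ≤ ρ) :
    ¬ IsBad ψ ρ s := by
  rintro (h | h) <;> linarith

lemma mem_Er_iff {t : ℝ} : t ∈ Er ψ 0 1 ρ ↔ t ∈ Set.Icc (0:ℝ) 1 ∧ ρ / 2 ≤ |ψ t| ∧ |ψ t| ≤ ρ :=
  Iff.rfl

lemma bad_isClosed (hψ : ContinuousOn ψ (Set.Icc 0 1)) {a c : ℝ} (ha : (0:ℝ) ≤ a) (hc : c ≤ 1) :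
    IsClosed {s ∈ Set.Icc a c | IsBad ψ ρ s} := by
  have h : {s ∈ Set.Icc a c | IsBad ψ ρ s}
      = Set.Icc a c ∩ (fun s => |ψ s|) ⁻¹' (Set.Iic (ρ / 4) ∪ Set.Ici (2 * ρ)) := by
    ext s; simp [IsBad]
  rw [h]
  exact ContinuousOn.preimage_isClosed_of_isClosed
    ((hψ.mono (Set.Icc_subset_Icc ha hc)).abs) isClosed_Icc (isClosed_Iic.union isClosed_Ici)

lemma bad_isCompact (hψ : ContinuousOn ψ (Set.Icc 0 1)) {a c : ℝ} (ha : (0:ℝ) ≤ a) (hc : c ≤ 1) :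
    IsCompact {s ∈ Set.Icc a c | IsBad ψ ρ s} :=
  isCompact_Icc.of_isClosed_subset (bad_isClosed hψ ha hc) (sep_subset _ _)

/-- Specification for `leftStop`. -/
lemma leftStop_spec (hψ : ContinuousOn ψ (Set.Icc 0 1)) {t : ℝ}
    (ht : t ∈ Set.Icc (0:ℝ) 1) :
    leftStop ψ 0 ρ t ∈ Set.Icc 0 t ∧
    (leftStop ψ 0 ρ t ≠ 0 → IsBad ψ ρ (leftStop ψ 0 ρ t)) ∧
    (∀ s, leftStop ψ 0 ρ t < s → s ≤ t → ¬ IsBad ψ ρ s) := by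
  by_cases hne : (badL ψ 0 ρ t).Nonempty
  · have hcp : IsCompact (badL ψ 0 ρ t) := by
      rw [badL_eq]; exact bad_isCompact hψ le_rfl ht.2
    have hmem : sSup (badL ψ 0 ρ t) ∈ badL ψ 0 ρ t := hcp.sSup_mem hne
    have hL : leftStop ψ 0 ρ t = sSup (badL ψ 0 ρ t) := if_pos hne
    refine ⟨hL ▸ hmem.1, fun _ => hL ▸ hmem.2, ?_⟩
    intro s hs hst hbad
    have : s ∈ badL ψ 0 ρ t := ⟨⟨le_trans (hL ▸ hmem.1).1 (le_of_lt hs), hst⟩, hbad⟩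
    have := le_csSup hcp.bddAbove this
    linarith
  · have hL : leftStop ψ 0 ρ t = 0 := if_neg hne
    refine ⟨by rw [hL]; exact ⟨le_rfl, ht.1⟩, fun h => absurd hL h, ?_⟩
    intro s hs hst hbad
    rw [hL] at hs
    exact hne ⟨s, ⟨⟨le_of_lt hs, hst⟩, hbad⟩⟩

/-- Specification for `rightStop`. -/
lemma rightStop_spec (hψ : ContinuousOn ψ (Set.Icc 0 1)) {t : ℝ}
    (ht : t ∈ Set.Icc (0:ℝ) 1) :
    rightStop ψ 1 ρ t ∈ Set.Icc t 1 ∧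
    (rightStop ψ 1 ρ t ≠ 1 → IsBad ψ ρ (rightStop ψ 1 ρ t)) ∧
    (∀ s, s < rightStop ψ 1 ρ t → t ≤ s → ¬ IsBad ψ ρ s) := by
  by_cases hne : (badR ψ 1 ρ t).Nonempty
  · have hcp : IsCompact (badR ψ 1 ρ t) := by
      rw [badR_eq]; exact bad_isCompact hψ ht.1 le_rfl
    have hmem : sInf (badR ψ 1 ρ t) ∈ badR ψ 1 ρ t := hcp.sInf_mem hne
    have hL : rightStop ψ 1 ρ t = sInf (badR ψ 1 ρ t) := if_pos hne
    refine ⟨hL ▸ hmem.1, fun _ => hL ▸ hmem.2, ?_⟩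
    intro s hs hst hbad
    have : s ∈ badR ψ 1 ρ t := ⟨⟨hst, le_trans (le_of_lt hs) (hL ▸ hmem.1).2⟩, hbad⟩
    have := csInf_le hcp.bddBelow this
    linarith
  · have hL : rightStop ψ 1 ρ t = 1 := if_neg hne
    refine ⟨by rw [hL]; exact ⟨ht.2, le_rfl⟩, fun h => absurd hL h, ?_⟩
    intro s hs hst hbad
    rw [hL] at hs
    exact hne ⟨s, ⟨⟨hst, le_of_lt hs⟩, hbad⟩⟩


section ErStruct

variable {t : ℝ}

lemma not_isBad_self (hρ : 0 < ρ) (ht : t ∈ Er ψ 0 1 ρ) : ¬ IsBad ψ ρ t :=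
  not_isBad_of_band hρ ht.2.1 ht.2.2

lemma leftStop_lt (hψ : ContinuousOn ψ (Set.Icc 0 1)) (hρ : 0 < ρ) (ht : t ∈ Er ψ 0 1 ρ)
    (h0 : t ≠ 0) : leftStop ψ 0 ρ t < t := by
  obtain ⟨hmem, hbad, -⟩ := leftStop_spec (ρ := ρ) hψ ht.1
  rcases lt_or_eq_of_le hmem.2 with h | h
  · exact h
  · exfalso
    by_cases hz : leftStop ψ 0 ρ t = 0
    · exact h0 (hz ▸ h.symm)
    · exact not_isBad_self hρ ht (h ▸ hbad hz)

lemma lt_rightStop (hψ : ContinuousOn ψ (Set.Icc 0 1)) (hρ : 0 < ρ) (ht : t ∈ Er ψ 0 1 ρ)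
    (h1 : t ≠ 1) : t < rightStop ψ 1 ρ t := by
  obtain ⟨hmem, hbad, -⟩ := rightStop_spec (ρ := ρ) hψ ht.1
  rcases lt_or_eq_of_le hmem.1 with h | h
  · exact h
  · exfalso
    by_cases hz : rightStop ψ 1 ρ t = 1
    · exact h1 (hz ▸ h)
    · exact not_isBad_self hρ ht (h.symm ▸ hbad hz)

lemma self_mem_It (hψ : ContinuousOn ψ (Set.Icc 0 1)) (hρ : 0 < ρ) (ht : t ∈ Er ψ 0 1 ρ) :
    t ∈ It ψ 0 1 ρ t := by
  have hl := leftStop_spec (ρ := ρ) hψ ht.1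
  have hr := rightStop_spec (ρ := ρ) hψ ht.1
  constructor
  · split_ifs with h
    · exact hl.1.2
    · refine leftStop_lt hψ hρ ht (fun h0 => h ?_)
      subst h0; have h1 := hl.1.1; have h2 := hl.1.2; linarith
  · split_ifs with h
    · exact hr.1.1
    · refine lt_rightStop hψ hρ ht (fun h1 => h ?_)
      subst h1; have h2 := hr.1.1; have h3 := hr.1.2; linarith

lemma mem_It_le {s : ℝ} (hs : s ∈ It ψ 0 1 ρ t) :
    leftStop ψ 0 ρ t ≤ s ∧ s ≤ rightStop ψ 1 ρ t := by
  obtain ⟨h1, h2⟩ := hs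
  constructor
  · split_ifs at h1 with h
    · exact h1
    · exact le_of_lt h1
  · split_ifs at h2 with h
    · exact h2
    · exact le_of_lt h2

lemma mem_It_strictL {s : ℝ} (hs : s ∈ It ψ 0 1 ρ t) (hne : leftStop ψ 0 ρ t ≠ 0) :
    leftStop ψ 0 ρ t < s := by
  obtain ⟨h1, -⟩ := hs
  rwa [if_neg hne] at h1

lemma mem_It_strictR {s : ℝ} (hs : s ∈ It ψ 0 1 ρ t) (hne : rightStop ψ 1 ρ t ≠ 1) :
    s < rightStop ψ 1 ρ t := by
  obtain ⟨-, h2⟩ := hs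
  rwa [if_neg hne] at h2

lemma It_subset_Icc (hψ : ContinuousOn ψ (Set.Icc 0 1)) (ht : t ∈ Er ψ 0 1 ρ) :
    It ψ 0 1 ρ t ⊆ Set.Icc 0 1 := by
  intro s hs
  have h := mem_It_le (t := t) hs
  have hl := (leftStop_spec (ρ := ρ) hψ ht.1).1
  have hr := (rightStop_spec (ρ := ρ) hψ ht.1).1
  exact ⟨le_trans hl.1 h.1, le_trans h.2 hr.2⟩

lemma good_between (hψ : ContinuousOn ψ (Set.Icc 0 1)) (ht : t ∈ Er ψ 0 1 ρ) {s : ℝ}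
    (h1 : leftStop ψ 0 ρ t < s) (h2 : s < rightStop ψ 1 ρ t) : ¬ IsBad ψ ρ s := by
  rcases le_or_gt s t with h | h
  · exact (leftStop_spec hψ ht.1).2.2 s h1 h
  · exact (rightStop_spec hψ ht.1).2.2 s h2 (le_of_lt h)

end ErStruct


section Eq

variable {t t' u : ℝ}

lemma It_congr (h1 : leftStop ψ 0 ρ t = leftStop ψ 0 ρ t')
    (h2 : rightStop ψ 1 ρ t = rightStop ψ 1 ρ t') : It ψ 0 1 ρ t = It ψ 0 1 ρ t' := by
  unfold It; rw [h1, h2]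

lemma stops_eq_of_mem_inter (hψ : ContinuousOn ψ (Set.Icc 0 1)) (hρ : 0 < ρ)
    (ht : t ∈ Er ψ 0 1 ρ) (ht' : t' ∈ Er ψ 0 1 ρ) (htt' : t ≤ t')
    (hu : u ∈ It ψ 0 1 ρ t ∩ It ψ 0 1 ρ t') :
    leftStop ψ 0 ρ t = leftStop ψ 0 ρ t' ∧ rightStop ψ 1 ρ t = rightStop ψ 1 ρ t' := by
  have ht0 : (0:ℝ) ≤ t := ht.1.1
  have ht'1 : t' ≤ 1 := ht'.1.2
  -- Step 1: no bad points in (t, t']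
  have hgood : ∀ s, t < s → s ≤ t' → ¬ IsBad ψ ρ s := by
    intro s hts hst' hbad
    have hsR : s ∈ badR ψ 1 ρ t := ⟨⟨le_of_lt hts, le_trans hst' ht'1⟩, hbad⟩
    have hne : (badR ψ 1 ρ t).Nonempty := ⟨s, hsR⟩
    have hcp : IsCompact (badR ψ 1 ρ t) := by
      rw [badR_eq]; exact bad_isCompact hψ ht.1.1 le_rfl
    have hBval : rightStop ψ 1 ρ t = sInf (badR ψ 1 ρ t) := if_pos hne
    have hBmem : sInf (badR ψ 1 ρ t) ∈ badR ψ 1 ρ t := hcp.sInf_mem hne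
    have hBle : rightStop ψ 1 ρ t ≤ s := hBval ▸ csInf_le hcp.bddBelow hsR
    have hBt : t < rightStop ψ 1 ρ t := by
      rcases lt_or_eq_of_le (hBval ▸ hBmem.1.1 : t ≤ rightStop ψ 1 ρ t) with h | h
      · exact h
      · exact absurd (h ▸ (hBval ▸ hBmem.2 : IsBad ψ ρ (rightStop ψ 1 ρ t)))
          (not_isBad_self hρ ht)
    -- rightStop t is a bad point in [0, t']
    have hBL : rightStop ψ 1 ρ t ∈ badL ψ 0 ρ t' :=
      ⟨⟨le_trans ht0 (le_of_lt hBt), le_trans hBle hst'⟩, hBval ▸ hBmem.2⟩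
    have hne' : (badL ψ 0 ρ t').Nonempty := ⟨_, hBL⟩
    have hcp' : IsCompact (badL ψ 0 ρ t') := by
      rw [badL_eq]; exact bad_isCompact hψ le_rfl ht'1
    have hAval : leftStop ψ 0 ρ t' = sSup (badL ψ 0 ρ t') := if_pos hne'
    have hAge : rightStop ψ 1 ρ t ≤ leftStop ψ 0 ρ t' := hAval ▸ le_csSup hcp'.bddAbove hBL
    have hAne : leftStop ψ 0 ρ t' ≠ 0 := by
      intro h; rw [h] at hAge; linarith
    have h1 := mem_It_strictL hu.2 hAne
    have h2 := (mem_It_le hu.1).2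
    linarith
  -- Step 2: no bad points in [t, t')
  have hgood' : ∀ s, t ≤ s → s < t' → ¬ IsBad ψ ρ s := by
    intro s hts hst' hbad
    have hsL : s ∈ badL ψ 0 ρ t' := ⟨⟨le_trans ht0 hts, le_of_lt hst'⟩, hbad⟩
    have hne' : (badL ψ 0 ρ t').Nonempty := ⟨s, hsL⟩
    have hcp' : IsCompact (badL ψ 0 ρ t') := by
      rw [badL_eq]; exact bad_isCompact hψ le_rfl ht'1
    have hAval : leftStop ψ 0 ρ t' = sSup (badL ψ 0 ρ t') := if_pos hne'
    have hAge : s ≤ leftStop ψ 0 ρ t' := hAval ▸ le_csSup hcp'.bddAbove hsL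
    have hAmem : sSup (badL ψ 0 ρ t') ∈ badL ψ 0 ρ t' := hcp'.sSup_mem hne'
    have hAbad : IsBad ψ ρ (leftStop ψ 0 ρ t') := hAval ▸ hAmem.2
    have hAne : leftStop ψ 0 ρ t' ≠ 0 := by
      intro h
      rw [h] at hAge
      have hs0 : s = 0 := le_antisymm hAge (le_trans ht0 hts)
      have ht00 : t = 0 := le_antisymm (by linarith) ht0
      exact not_isBad_self hρ ht (by rwa [ht00, ← hs0])
    have h1 := mem_It_strictL hu.2 hAne
    -- leftStop t' is a bad point in [t, 1]
    have hAR : leftStop ψ 0 ρ t' ∈ badR ψ 1 ρ t :=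
      ⟨⟨le_trans hts hAge, le_trans (hAval ▸ hAmem.1.2) ht'1⟩, hAbad⟩
    have hne'' : (badR ψ 1 ρ t).Nonempty := ⟨_, hAR⟩
    have hcp'' : IsCompact (badR ψ 1 ρ t) := by
      rw [badR_eq]; exact bad_isCompact hψ ht0 le_rfl
    have hBval : rightStop ψ 1 ρ t = sInf (badR ψ 1 ρ t) := if_pos hne''
    have hBle : rightStop ψ 1 ρ t ≤ leftStop ψ 0 ρ t' := hBval ▸ csInf_le hcp''.bddBelow hAR
    have h2 := (mem_It_le hu.1).2
    linarith
  -- Step 3: equality of bad sets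
  have hbL : badL ψ 0 ρ t = badL ψ 0 ρ t' := by
    ext s
    constructor
    · rintro ⟨⟨h0, h1⟩, h2⟩; exact ⟨⟨h0, le_trans h1 htt'⟩, h2⟩
    · rintro ⟨⟨h0, h1⟩, h2⟩
      refine ⟨⟨h0, ?_⟩, h2⟩
      by_contra h
      push_neg at h
      exact hgood s h h1 h2
  have hbR : badR ψ 1 ρ t = badR ψ 1 ρ t' := by
    ext s
    constructor
    · rintro ⟨⟨h0, h1⟩, h2⟩
      refine ⟨⟨?_, h1⟩, h2⟩
      by_contra h
      push_neg at h
      exact hgood' s h0 h h2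
    · rintro ⟨⟨h0, h1⟩, h2⟩; exact ⟨⟨le_trans htt' h0, h1⟩, h2⟩
  constructor
  · unfold leftStop; rw [hbL]
  · unfold rightStop; rw [hbR]

end Eq


section Eq2

variable {t t' u : ℝ}

lemma It_eq_of_mem_inter (hψ : ContinuousOn ψ (Set.Icc 0 1)) (hρ : 0 < ρ)
    (ht : t ∈ Er ψ 0 1 ρ) (ht' : t' ∈ Er ψ 0 1 ρ)
    (hu : u ∈ It ψ 0 1 ρ t ∩ It ψ 0 1 ρ t') : It ψ 0 1 ρ t = It ψ 0 1 ρ t' := by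
  rcases le_total t t' with h | h
  · obtain ⟨h1, h2⟩ := stops_eq_of_mem_inter hψ hρ ht ht' h hu
    exact It_congr h1 h2
  · obtain ⟨h1, h2⟩ := stops_eq_of_mem_inter hψ hρ ht' ht h ⟨hu.2, hu.1⟩
    exact (It_congr h1 h2).symm

lemma It_eq_or_disjoint (hψ : ContinuousOn ψ (Set.Icc 0 1)) (hρ : 0 < ρ)
    (ht : t ∈ Er ψ 0 1 ρ) (ht' : t' ∈ Er ψ 0 1 ρ) :
    It ψ 0 1 ρ t = It ψ 0 1 ρ t' ∨ Disjoint (It ψ 0 1 ρ t) (It ψ 0 1 ρ t') := by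
  by_cases h : Disjoint (It ψ 0 1 ρ t) (It ψ 0 1 ρ t')
  · exact Or.inr h
  · left
    rw [Set.not_disjoint_iff] at h
    obtain ⟨u, hu1, hu2⟩ := h
    exact It_eq_of_mem_inter hψ hρ ht ht' ⟨hu1, hu2⟩

/-- Ordering of distinct intervals: if `t < t'` and the intervals differ, the right stop of `t`
is a bad point lying between `t` and `t'`, below the left stop of `t'`. -/
lemma stops_order (hψ : ContinuousOn ψ (Set.Icc 0 1)) (hρ : 0 < ρ)
    (ht : t ∈ Er ψ 0 1 ρ) (ht' : t' ∈ Er ψ 0 1 ρ) (htt' : t < t')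
    (hne : It ψ 0 1 ρ t ≠ It ψ 0 1 ρ t') :
    IsBad ψ ρ (rightStop ψ 1 ρ t) ∧ t < rightStop ψ 1 ρ t ∧
    rightStop ψ 1 ρ t ≤ leftStop ψ 0 ρ t' ∧ leftStop ψ 0 ρ t' < t' ∧
    IsBad ψ ρ (leftStop ψ 0 ρ t') ∧ rightStop ψ 1 ρ t ≠ 1 ∧ leftStop ψ 0 ρ t' ≠ 0 := by
  have hdisj : Disjoint (It ψ 0 1 ρ t) (It ψ 0 1 ρ t') :=
    (It_eq_or_disjoint hψ hρ ht ht').resolve_left hne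
  have ht'mem : t' ∉ It ψ 0 1 ρ t := fun h =>
    (Set.disjoint_left.mp hdisj h) (self_mem_It hψ hρ ht')
  have ht0 : (0:ℝ) ≤ t := ht.1.1
  have hlcond : (if leftStop ψ 0 ρ t = 0 then leftStop ψ 0 ρ t ≤ t' else leftStop ψ 0 ρ t < t') := by
    split_ifs with h
    · rw [h]; linarith
    · have htne0 : t ≠ 0 := by
        intro h0
        subst h0
        have := (leftStop_spec (ρ := ρ) hψ ht.1).1
        exact h (le_antisymm this.2 this.1)
      have := leftStop_lt hψ hρ ht htne0
      linarith
  have hrcond : ¬ (if rightStop ψ 1 ρ t = 1 then t' ≤ rightStop ψ 1 ρ t else t' < rightStop ψ 1 ρ t) := by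
    intro h
    exact ht'mem ⟨hlcond, h⟩
  have hB1 : rightStop ψ 1 ρ t ≠ 1 := by
    intro h
    rw [if_pos h, h] at hrcond
    exact hrcond ht'.1.2
  rw [if_neg hB1] at hrcond
  push_neg at hrcond
  have hBbad : IsBad ψ ρ (rightStop ψ 1 ρ t) := (rightStop_spec (ρ := ρ) hψ ht.1).2.1 hB1
  have htB : t < rightStop ψ 1 ρ t := lt_rightStop hψ hρ ht (fun h => by
    rw [h] at htt'; exact absurd ht'.1.2 (not_le.mpr htt'))
  have hBL : rightStop ψ 1 ρ t ∈ badL ψ 0 ρ t' := ⟨⟨by linarith, hrcond⟩, hBbad⟩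
  have hne' : (badL ψ 0 ρ t').Nonempty := ⟨_, hBL⟩
  have hcp' : IsCompact (badL ψ 0 ρ t') := by
    rw [badL_eq]; exact bad_isCompact hψ le_rfl ht'.1.2
  have hAval : leftStop ψ 0 ρ t' = sSup (badL ψ 0 ρ t') := if_pos hne'
  have hBA : rightStop ψ 1 ρ t ≤ leftStop ψ 0 ρ t' := hAval ▸ le_csSup hcp'.bddAbove hBL
  have hA0 : leftStop ψ 0 ρ t' ≠ 0 := by intro h; rw [h] at hBA; linarith
  have hAbad : IsBad ψ ρ (leftStop ψ 0 ρ t') := (leftStop_spec (ρ := ρ) hψ ht'.1).2.1 hA0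
  have hAt' : leftStop ψ 0 ρ t' < t' := leftStop_lt hψ hρ ht' (by intro h; rw [h] at htt'; linarith)
  exact ⟨hBbad, htB, hBA, hAt', hAbad, hB1, hA0⟩

/-- two intervals whose left stop is `0` coincide. -/
lemma It_eq_of_leftStop_eq_zero (hψ : ContinuousOn ψ (Set.Icc 0 1)) (hρ : 0 < ρ)
    (ht : t ∈ Er ψ 0 1 ρ) (ht' : t' ∈ Er ψ 0 1 ρ)
    (h0 : leftStop ψ 0 ρ t = 0) (h0' : leftStop ψ 0 ρ t' = 0) :
    It ψ 0 1 ρ t = It ψ 0 1 ρ t' := by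
  have hBpos : ∀ {x : ℝ}, x ∈ Er ψ 0 1 ρ → 0 < rightStop ψ 1 ρ x := by
    intro x hx
    by_cases h1 : x = 1
    · subst h1; have := (rightStop_spec (ρ := ρ) hψ hx.1).1.1; linarith
    · have := lt_rightStop hψ hρ hx h1
      have := hx.1.1
      linarith
  set m := min (rightStop ψ 1 ρ t) (rightStop ψ 1 ρ t') / 2 with hm
  have hmpos : 0 < m := by
    have := hBpos ht; have := hBpos ht'
    have : 0 < min (rightStop ψ 1 ρ t) (rightStop ψ 1 ρ t') := lt_min (hBpos ht) (hBpos ht')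
    positivity
  have hmlt : m < rightStop ψ 1 ρ t ∧ m < rightStop ψ 1 ρ t' := by
    constructor
    · calc m < min (rightStop ψ 1 ρ t) (rightStop ψ 1 ρ t') := by
              rw [hm]; linarith [lt_min (hBpos ht) (hBpos ht')]
        _ ≤ _ := min_le_left _ _
    · calc m < min (rightStop ψ 1 ρ t) (rightStop ψ 1 ρ t') := by
              rw [hm]; linarith [lt_min (hBpos ht) (hBpos ht')]
        _ ≤ _ := min_le_right _ _
  have hmem : m ∈ It ψ 0 1 ρ t ∩ It ψ 0 1 ρ t' := by
    constructor
    · exact ⟨by rw [if_pos h0, h0]; linarith, by split_ifs <;> linarith [hmlt.1]⟩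
    · exact ⟨by rw [if_pos h0', h0']; linarith, by split_ifs <;> linarith [hmlt.2]⟩
  exact It_eq_of_mem_inter hψ hρ ht ht' hmem

/-- two intervals whose right stop is `1` coincide. -/
lemma It_eq_of_rightStop_eq_one (hψ : ContinuousOn ψ (Set.Icc 0 1)) (hρ : 0 < ρ)
    (ht : t ∈ Er ψ 0 1 ρ) (ht' : t' ∈ Er ψ 0 1 ρ)
    (h0 : rightStop ψ 1 ρ t = 1) (h0' : rightStop ψ 1 ρ t' = 1) :
    It ψ 0 1 ρ t = It ψ 0 1 ρ t' := by
  have hApos : ∀ {x : ℝ}, x ∈ Er ψ 0 1 ρ → leftStop ψ 0 ρ x < 1 := by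
    intro x hx
    by_cases h1 : x = 0
    · subst h1; have := (leftStop_spec (ρ := ρ) hψ hx.1).1.2; linarith
    · have := leftStop_lt hψ hρ hx h1
      have := hx.1.2
      linarith
  set m := (max (leftStop ψ 0 ρ t) (leftStop ψ 0 ρ t') + 1) / 2 with hm
  have hmax : max (leftStop ψ 0 ρ t) (leftStop ψ 0 ρ t') < 1 := max_lt (hApos ht) (hApos ht')
  have hmgt : leftStop ψ 0 ρ t < m ∧ leftStop ψ 0 ρ t' < m := by
    constructor
    · calc leftStop ψ 0 ρ t ≤ max (leftStop ψ 0 ρ t) (leftStop ψ 0 ρ t') := le_max_left _ _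
        _ < m := by rw [hm]; linarith
    · calc leftStop ψ 0 ρ t' ≤ max (leftStop ψ 0 ρ t) (leftStop ψ 0 ρ t') := le_max_right _ _
        _ < m := by rw [hm]; linarith
  have hm1 : m ≤ 1 := by rw [hm]; linarith
  have hmem : m ∈ It ψ 0 1 ρ t ∩ It ψ 0 1 ρ t' := by
    constructor
    · exact ⟨by split_ifs <;> linarith [hmgt.1], by rw [if_pos h0, h0]; linarith⟩
    · exact ⟨by split_ifs <;> linarith [hmgt.2], by rw [if_pos h0', h0']; linarith⟩
  exact It_eq_of_mem_inter hψ hρ ht ht' hmem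

end Eq2


section Vol

open MeasureTheory

variable {t : ℝ}

lemma It_eq_interval :
    It ψ 0 1 ρ t =
      (if leftStop ψ 0 ρ t = 0 then Set.Ici (leftStop ψ 0 ρ t) else Set.Ioi (leftStop ψ 0 ρ t)) ∩
      (if rightStop ψ 1 ρ t = 1 then Set.Iic (rightStop ψ 1 ρ t) else Set.Iio (rightStop ψ 1 ρ t)) := by
  ext s
  simp only [It, Set.mem_setOf_eq, Set.mem_inter_iff, Set.mem_Ici, Set.mem_Ioi, Set.mem_Iic,
    Set.mem_Iio]
  split_ifs <;> tauto

lemma It_measurable : MeasurableSet (It ψ 0 1 ρ t) := by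
  rw [It_eq_interval]
  split_ifs <;> exact MeasurableSet.inter (by measurability) (by measurability)

lemma It_volume (hAB : leftStop ψ 0 ρ t ≤ rightStop ψ 1 ρ t) :
    volume (It ψ 0 1 ρ t) = ENNReal.ofReal (rightStop ψ 1 ρ t - leftStop ψ 0 ρ t) := by
  rw [It_eq_interval]
  split_ifs
  · rw [Set.Ici_inter_Iic, Real.volume_Icc]
  · rw [Set.Ici_inter_Iio, Real.volume_Ico]
  · rw [Set.Ioi_inter_Iic, Real.volume_Ioc]
  · rw [Set.Ioi_inter_Iio, Real.volume_Ioo]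

lemma stops_le (hψ : ContinuousOn ψ (Set.Icc 0 1)) (ht : t ∈ Er ψ 0 1 ρ) :
    leftStop ψ 0 ρ t ≤ t ∧ t ≤ rightStop ψ 1 ρ t ∧ 0 ≤ leftStop ψ 0 ρ t ∧ rightStop ψ 1 ρ t ≤ 1 :=
  ⟨(leftStop_spec (ρ := ρ) hψ ht.1).1.2, (rightStop_spec (ρ := ρ) hψ ht.1).1.1,
   (leftStop_spec (ρ := ρ) hψ ht.1).1.1, (rightStop_spec (ρ := ρ) hψ ht.1).1.2⟩

/-- The total length of distinct intervals is at most 1. -/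
lemma sum_len_le_one (hψ : ContinuousOn ψ (Set.Icc 0 1)) (hρ : 0 < ρ) (F : Finset ℝ)
    (hF : ∀ x ∈ F, x ∈ Er ψ 0 1 ρ)
    (hinj : ∀ x ∈ F, ∀ y ∈ F, x ≠ y → It ψ 0 1 ρ x ≠ It ψ 0 1 ρ y) :
    ∑ x ∈ F, (rightStop ψ 1 ρ x - leftStop ψ 0 ρ x) ≤ 1 := by
  have hdisj : (↑F : Set ℝ).PairwiseDisjoint (It ψ 0 1 ρ) := by
    intro x hx y hy hxy
    exact (It_eq_or_disjoint hψ hρ (hF x hx) (hF y hy)).resolve_left (hinj x hx y hy hxy)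
  have hmeas : ∀ x ∈ F, MeasurableSet (It ψ 0 1 ρ x) := fun x _ => It_measurable
  have hvol := measure_biUnion_finset hdisj hmeas (μ := volume)
  have hsub : (⋃ x ∈ F, It ψ 0 1 ρ x) ⊆ Set.Icc (0:ℝ) 1 := by
    intro s hs
    simp only [Set.mem_iUnion] at hs
    obtain ⟨x, hx, hsx⟩ := hs
    exact It_subset_Icc hψ (hF x hx) hsx
  have hle : ∑ x ∈ F, volume (It ψ 0 1 ρ x) ≤ 1 := by
    rw [← hvol]
    calc volume (⋃ x ∈ F, It ψ 0 1 ρ x) ≤ volume (Set.Icc (0:ℝ) 1) := measure_mono hsub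
      _ = 1 := by rw [Real.volume_Icc]; norm_num
  have heq : ∑ x ∈ F, volume (It ψ 0 1 ρ x)
      = ENNReal.ofReal (∑ x ∈ F, (rightStop ψ 1 ρ x - leftStop ψ 0 ρ x)) := by
    rw [ENNReal.ofReal_sum_of_nonneg]
    · exact Finset.sum_congr rfl fun x hx =>
        It_volume (le_trans (stops_le hψ (hF x hx)).1 (stops_le hψ (hF x hx)).2.1)
    · intro x hx
      have h := stops_le hψ (hF x hx)
      linarith [h.1, h.2.1]
  rw [heq] at hle
  have := (ENNReal.ofReal_le_one).mp hle
  linarith [this]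

/-- variation across a bad stop. -/
lemma bad_variation (hρ : 0 < ρ) {x : ℝ} (hx : IsBad ψ ρ x) {y : ℝ}
    (hy1 : ρ / 2 ≤ |ψ y|) (hy2 : |ψ y| ≤ ρ) : ρ / 4 ≤ |ψ y - ψ x| := by
  have h1 : |ψ y| - |ψ x| ≤ |ψ y - ψ x| := abs_sub_abs_le_abs_sub _ _
  have h2 : |ψ x| - |ψ y| ≤ |ψ x - ψ y| := abs_sub_abs_le_abs_sub _ _
  rw [abs_sub_comm] at h2
  rcases hx with h | h
  · linarith
  · linarith

/-- The collection of intervals is finite. -/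
lemma image_finite (hψ : ContinuousOn ψ (Set.Icc 0 1)) (hρ : 0 < ρ) :
    (It ψ 0 1 ρ '' Er ψ 0 1 ρ).Finite := by
  -- uniform continuity
  have huc : UniformContinuousOn ψ (Set.Icc 0 1) :=
    isCompact_Icc.uniformContinuousOn_of_continuous hψ
  rw [Metric.uniformContinuousOn_iff] at huc
  obtain ⟨δ, hδ, hucd⟩ := huc (ρ/4) (by linarith)
  by_contra hinf
  obtain ⟨S, hSsub, hSfin, hScard⟩ := Set.Infinite.exists_subset_ncard_eq hinf (⌈1/δ⌉₊ + 3)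
  -- choose representatives
  have hrep : ∀ Q ∈ S, ∃ x, x ∈ Er ψ 0 1 ρ ∧ It ψ 0 1 ρ x = Q := by
    intro Q hQ
    obtain ⟨x, hx, hxQ⟩ := hSsub hQ
    exact ⟨x, hx, hxQ⟩
  choose! τ hτEr hτIt using hrep
  set F : Finset ℝ := hSfin.toFinset.image τ with hFdef
  have hmemF : ∀ x ∈ F, ∃ Q ∈ S, τ Q = x := by
    intro x hx
    rw [hFdef] at hx
    simp only [Finset.mem_image, Set.Finite.mem_toFinset] at hx
    exact hx
  have hFer : ∀ x ∈ F, x ∈ Er ψ 0 1 ρ := by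
    intro x hx
    obtain ⟨Q, hQ, rfl⟩ := hmemF x hx
    exact hτEr Q hQ
  have hItF : ∀ x ∈ F, It ψ 0 1 ρ x ∈ S := by
    intro x hx
    obtain ⟨Q, hQ, rfl⟩ := hmemF x hx
    rw [hτIt Q hQ]; exact hQ
  have hinjτ : Set.InjOn τ S := by
    intro Q hQ Q' hQ' h
    rw [← hτIt Q hQ, ← hτIt Q' hQ', h]
  have hcardF : F.card = ⌈1/δ⌉₊ + 3 := by
    rw [hFdef, Finset.card_image_of_injOn (by
      intro a ha b hb hab
      exact hinjτ (hSfin.mem_toFinset.mp ha) (hSfin.mem_toFinset.mp hb) hab)]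
    rw [← hScard, Set.ncard_eq_toFinset_card S hSfin]
  have hinj : ∀ x ∈ F, ∀ y ∈ F, x ≠ y → It ψ 0 1 ρ x ≠ It ψ 0 1 ρ y := by
    intro x hx y hy hxy heq
    obtain ⟨Q, hQ, rfl⟩ := hmemF x hx
    obtain ⟨Q', hQ', rfl⟩ := hmemF y hy
    rw [hτIt Q hQ, hτIt Q' hQ'] at heq
    exact hxy (by rw [heq])
  -- interior elements
  set G : Finset ℝ := F.filter (fun x => leftStop ψ 0 ρ x ≠ 0 ∧ rightStop ψ 1 ρ x ≠ 1) with hGdef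
  have hG1 : (F.filter (fun x => leftStop ψ 0 ρ x = 0)).card ≤ 1 := by
    apply Finset.card_le_one.mpr
    intro a ha b hb
    rw [Finset.mem_filter] at ha hb
    by_contra hab
    exact hinj a ha.1 b hb.1 hab
      (It_eq_of_leftStop_eq_zero hψ hρ (hFer a ha.1) (hFer b hb.1) ha.2 hb.2)
  have hG2 : (F.filter (fun x => rightStop ψ 1 ρ x = 1)).card ≤ 1 := by
    apply Finset.card_le_one.mpr
    intro a ha b hb
    rw [Finset.mem_filter] at ha hb
    by_contra hab
    exact hinj a ha.1 b hb.1 hab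
      (It_eq_of_rightStop_eq_one hψ hρ (hFer a ha.1) (hFer b hb.1) ha.2 hb.2)
  have hGcard : F.card ≤ G.card + 2 := by
    have hsub : F ⊆ G ∪ F.filter (fun x => leftStop ψ 0 ρ x = 0)
        ∪ F.filter (fun x => rightStop ψ 1 ρ x = 1) := by
      intro x hx
      simp only [Finset.mem_union, hGdef, Finset.mem_filter]
      by_cases h1 : leftStop ψ 0 ρ x = 0
      · exact Or.inl (Or.inr ⟨hx, h1⟩)
      · by_cases h2 : rightStop ψ 1 ρ x = 1
        · exact Or.inr ⟨hx, h2⟩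
        · exact Or.inl (Or.inl ⟨hx, h1, h2⟩)
    calc F.card ≤ (G ∪ F.filter (fun x => leftStop ψ 0 ρ x = 0)
        ∪ F.filter (fun x => rightStop ψ 1 ρ x = 1)).card := Finset.card_le_card hsub
      _ ≤ (G ∪ F.filter (fun x => leftStop ψ 0 ρ x = 0)).card
          + (F.filter (fun x => rightStop ψ 1 ρ x = 1)).card := Finset.card_union_le _ _
      _ ≤ G.card + (F.filter (fun x => leftStop ψ 0 ρ x = 0)).card
          + (F.filter (fun x => rightStop ψ 1 ρ x = 1)).card := by
            linarith [Finset.card_union_le G (F.filter (fun x => leftStop ψ 0 ρ x = 0))]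
      _ ≤ G.card + 2 := by omega
  -- each interior interval has length ≥ δ
  have hlen : ∀ x ∈ G, δ ≤ rightStop ψ 1 ρ x - leftStop ψ 0 ρ x := by
    intro x hx
    rw [hGdef, Finset.mem_filter] at hx
    obtain ⟨hxF, hA0, hB1⟩ := hx
    have hxEr := hFer x hxF
    have hAbad : IsBad ψ ρ (leftStop ψ 0 ρ x) := (leftStop_spec (ρ := ρ) hψ hxEr.1).2.1 hA0
    have hvar := bad_variation hρ hAbad hxEr.2.1 hxEr.2.2
    have hstops := stops_le hψ hxEr
    have hxI : x ∈ Set.Icc (0:ℝ) 1 := hxEr.1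
    have hAI : leftStop ψ 0 ρ x ∈ Set.Icc (0:ℝ) 1 :=
      ⟨hstops.2.2.1, le_trans hstops.1 hxI.2⟩
    by_contra hcon
    push_neg at hcon
    have hdist : dist x (leftStop ψ 0 ρ x) < δ := by
      rw [Real.dist_eq, abs_sub_lt_iff]
      constructor <;> linarith [hstops.1, hstops.2.1]
    have := hucd x hxI (leftStop ψ 0 ρ x) hAI hdist
    rw [Real.dist_eq] at this
    linarith
  have hsum := sum_len_le_one hψ hρ G
    (fun x hx => hFer x (Finset.mem_filter.mp (hGdef ▸ hx)).1)
    (fun x hx y hy hxy => hinj x (Finset.mem_filter.mp (hGdef ▸ hx)).1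
      y (Finset.mem_filter.mp (hGdef ▸ hy)).1 hxy)
  have hsum2 : (G.card : ℝ) * δ ≤ 1 := by
    calc (G.card : ℝ) * δ = ∑ _x ∈ G, δ := by rw [Finset.sum_const, nsmul_eq_mul]
      _ ≤ ∑ x ∈ G, (rightStop ψ 1 ρ x - leftStop ψ 0 ρ x) := Finset.sum_le_sum hlen
      _ ≤ 1 := hsum
  have hgc : ((⌈1/δ⌉₊:ℝ) + 1) * δ ≤ 1 := by
    have hcast : (⌈1/δ⌉₊ + 1 : ℝ) ≤ (G.card : ℝ) := by
      have : ⌈1/δ⌉₊ + 1 ≤ G.card := by omega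
      exact_mod_cast this
    calc ((⌈1/δ⌉₊:ℝ) + 1) * δ ≤ (G.card : ℝ) * δ := by
          apply mul_le_mul_of_nonneg_right hcast (le_of_lt hδ)
      _ ≤ 1 := hsum2
  have hceil : 1/δ ≤ (⌈1/δ⌉₊ : ℝ) := Nat.le_ceil _
  have : (1/δ) * δ = 1 := by field_simp
  nlinarith

end Vol


end Generic

section Analysis

variable {φ φ' : ℝ → ℝ} {r ρ : ℝ}

/-- The key arithmetic contradiction: a monotone function cannot pass through the band
`[r/2, r]` (in absolute value) at three points separated by bad points. -/
lemma mono3 (hr : 0 < r) {f : ℝ → ℝ} {x1 u x2 v x3 : ℝ}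
    (hx1u : x1 ≤ u) (hux2 : u ≤ x2) (hx2v : x2 ≤ v) (hvx3 : v ≤ x3)
    (hmono : MonotoneOn f (Set.Icc x1 x3))
    (hb1' : |f x1| ≤ r)
    (hb2 : r / 2 ≤ |f x2|) (hb2' : |f x2| ≤ r)
    (hb3' : |f x3| ≤ r)
    (hu : |f u| ≤ r / 4 ∨ 2 * r ≤ |f u|) (hv : |f v| ≤ r / 4 ∨ 2 * r ≤ |f v|) : False := by
  have hm1 : f x1 ≤ f u := hmono ⟨le_rfl, by linarith⟩ ⟨hx1u, by linarith⟩ hx1u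
  have hm2 : f u ≤ f x2 := hmono ⟨hx1u, by linarith⟩ ⟨by linarith, by linarith⟩ hux2
  have hm3 : f x2 ≤ f v := hmono ⟨by linarith, by linarith⟩ ⟨by linarith, hvx3⟩ hx2v
  have hm4 : f v ≤ f x3 := hmono ⟨by linarith, hvx3⟩ ⟨by linarith, le_rfl⟩ hvx3
  have hx1r : -r ≤ f x1 := (abs_le.mp hb1').1
  have hx3r : f x3 ≤ r := (abs_le.mp hb3').2
  have hx2r : f x2 ≤ r := (abs_le.mp hb2').2
  have hur : |f u| ≤ r := abs_le.mpr ⟨by linarith, by linarith⟩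
  have hu4 : |f u| ≤ r / 4 := by
    rcases hu with h | h
    · exact h
    · linarith
  have hu4' : -(r/4) ≤ f u := (abs_le.mp hu4).1
  have hx2pos : r / 2 ≤ f x2 := by
    rcases le_abs.mp hb2 with h | h
    · exact h
    · linarith
  have hvpos : r / 2 ≤ f v := by linarith
  have hvabs : |f v| = f v := abs_of_pos (by linarith)
  rcases hv with h | h <;> rw [hvabs] at h <;> linarith

/-- If `φ'` is nonvanishing on `[α,β] ⊆ (0,1)`, then `φ` or `-φ` is monotone there. -/
lemma mono_of_ne_zero
    (hderiv : ∀ t ∈ Set.Icc (0:ℝ) 1, HasDerivWithinAt φ (φ' t) (Set.Icc (0:ℝ) 1) t)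
    (hcont : ContinuousOn φ' (Set.Icc (0:ℝ) 1))
    {α β : ℝ} (hαβ : α < β) (h0 : 0 < α) (h1 : β < 1)
    (hne : ∀ x ∈ Set.Icc α β, φ' x ≠ 0) :
    MonotoneOn φ (Set.Icc α β) ∨ MonotoneOn (fun x => -φ x) (Set.Icc α β) := by
  have hsub : Set.Icc α β ⊆ Set.Icc (0:ℝ) 1 :=
    Set.Icc_subset_Icc (le_of_lt h0) (le_of_lt h1)
  have hφcont : ContinuousOn φ (Set.Icc (0:ℝ) 1) :=
    fun t ht => (hderiv t ht).continuousWithinAt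
  have hDA : ∀ x ∈ Set.Ioo α β, HasDerivAt φ (φ' x) x := by
    intro x hx
    exact (hderiv x (hsub ⟨le_of_lt hx.1, le_of_lt hx.2⟩)).hasDerivAt
      (Icc_mem_nhds (by linarith [hx.1]) (by linarith [hx.2]))
  by_cases hpos : ∀ x ∈ Set.Icc α β, 0 < φ' x
  · left
    refine (strictMonoOn_of_deriv_pos (convex_Icc α β) (hφcont.mono hsub) ?_).monotoneOn
    intro x hx
    rw [interior_Icc] at hx
    rw [(hDA x hx).deriv]
    exact hpos x ⟨le_of_lt hx.1, le_of_lt hx.2⟩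
  · right
    push_neg at hpos
    obtain ⟨y, hy, hyneg⟩ := hpos
    have hyneg' : φ' y < 0 := lt_of_le_of_ne hyneg (hne y hy)
    have hallneg : ∀ x ∈ Set.Icc α β, φ' x < 0 := by
      intro x hx
      rcases lt_or_ge (φ' x) 0 with h | h
      · exact h
      · exfalso
        have hxpos : 0 < φ' x := lt_of_le_of_ne h (Ne.symm (hne x hx))
        have hcc : ContinuousOn φ' (Set.uIcc y x) :=
          hcont.mono ((Set.uIcc_subset_Icc hy hx).trans hsub)
        have h0mem : (0:ℝ) ∈ Set.uIcc (φ' y) (φ' x) :=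
          Set.mem_uIcc.mpr (Or.inl ⟨le_of_lt hyneg', le_of_lt hxpos⟩)
        obtain ⟨z, hz, hz0⟩ := intermediate_value_uIcc hcc h0mem
        exact hne z ((Set.uIcc_subset_Icc hy hx) hz) hz0
    have : StrictAntiOn φ (Set.Icc α β) := by
      refine strictAntiOn_of_deriv_neg (convex_Icc α β) (hφcont.mono hsub) ?_
      intro x hx
      rw [interior_Icc] at hx
      rw [(hDA x hx).deriv]
      exact hallneg x ⟨le_of_lt hx.1, le_of_lt hx.2⟩
    intro a ha b hb hab
    simp only [neg_le_neg_iff]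
    exact this.antitoneOn ha hb hab


/-- No interval `[ta, tc] ⊆ (0,1)` spanning three band points separated by bad points can have
nonvanishing `φ'`. -/
lemma no_span (hr : 0 < r)
    (hderiv : ∀ t ∈ Set.Icc (0:ℝ) 1, HasDerivWithinAt φ (φ' t) (Set.Icc (0:ℝ) 1) t)
    (hcont : ContinuousOn φ' (Set.Icc (0:ℝ) 1))
    {ta tb tc u v : ℝ}
    (hta : ta ∈ Er φ 0 1 r) (htb : tb ∈ Er φ 0 1 r) (htc : tc ∈ Er φ 0 1 r)
    (h1 : ta ≤ u) (h2 : u ≤ tb) (h3 : tb ≤ v) (h4 : v ≤ tc)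
    (hu : IsBad φ r u) (hv : IsBad φ r v)
    (h0 : 0 < ta) (hlt1 : tc < 1)
    (hne : ∀ x ∈ Set.Icc ta tc, φ' x ≠ 0) : False := by
  have hρ4 : ¬ IsBad φ r ta := not_isBad_of_band hr hta.2.1 hta.2.2
  rcases eq_or_lt_of_le (le_trans h1 (le_trans h2 (le_trans h3 h4))) with heq | hlt
  · -- degenerate: ta = tc, so u = ta
    have hu' : u = ta := le_antisymm (by linarith [heq ▸ le_trans h2 (le_trans h3 h4)]) h1
    exact hρ4 (hu' ▸ hu)
  · rcases mono_of_ne_zero hderiv hcont hlt h0 hlt1 hne with hmono | hmono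
    · exact mono3 hr h1 h2 h3 h4 hmono hta.2.2 htb.2.1 htb.2.2 htc.2.2 hu hv
    · have e : ∀ x : ℝ, |(fun y => -φ y) x| = |φ x| := fun x => abs_neg _
      exact mono3 hr h1 h2 h3 h4 hmono
        (by simpa using hta.2.2) (by simpa using htb.2.1) (by simpa using htb.2.2)
        (by simpa using htc.2.2)
        (by simpa [IsBad] using hu) (by simpa [IsBad] using hv)

/-- Mean value theorem: a large derivative point inside the interval. -/
lemma exists_large_deriv (hr : 0 < r)
    (hderiv : ∀ t ∈ Set.Icc (0:ℝ) 1, HasDerivWithinAt φ (φ' t) (Set.Icc (0:ℝ) 1) t)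
    {x : ℝ} (hx : x ∈ Er φ 0 1 r) (hA0 : leftStop φ 0 r x ≠ 0) :
    ∃ c ∈ Set.Ioo (leftStop φ 0 r x) x, r / 4 ≤ |φ' c| * (x - leftStop φ 0 r x) := by
  have hφcont : ContinuousOn φ (Set.Icc (0:ℝ) 1) :=
    fun t ht => (hderiv t ht).continuousWithinAt
  set A := leftStop φ 0 r x with hAdef
  have hspec := leftStop_spec (ρ := r) hφcont hx.1
  have hAx : A < x := by
    refine leftStop_lt hφcont hr hx (fun h0 => hA0 ?_)
    subst h0
    exact le_antisymm hspec.1.2 hspec.1.1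
  have hA0' : 0 < A := lt_of_le_of_ne hspec.1.1 (Ne.symm hA0)
  have hx1 : x ≤ 1 := hx.1.2
  have hconts : ContinuousOn φ (Set.Icc A x) :=
    hφcont.mono (Set.Icc_subset_Icc (le_of_lt hA0') hx1)
  have hDA : ∀ y ∈ Set.Ioo A x, HasDerivAt φ (φ' y) y := by
    intro y hy
    exact (hderiv y ⟨by linarith [hy.1], by linarith [hy.2]⟩).hasDerivAt
      (Icc_mem_nhds (by linarith [hy.1]) (by linarith [hy.2]))
  obtain ⟨c, hc, hceq⟩ := exists_hasDerivAt_eq_slope φ φ' hAx hconts hDA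
  refine ⟨c, hc, ?_⟩
  have hvar : r / 4 ≤ |φ x - φ A| := bad_variation hr (hspec.2.1 hA0) hx.2.1 hx.2.2
  rw [hceq, abs_div, abs_of_pos (by linarith : (0:ℝ) < x - A), div_mul_cancel₀]
  · exact hvar
  · linarith

/-- IVT: a band point for `φ'` between a large-derivative point and a small-derivative point. -/
lemma exists_band_point (hρ : 0 < ρ)
    (hcont : ContinuousOn φ' (Set.Icc (0:ℝ) 1))
    {c w lo hi : ℝ} (hc1 : ρ ≤ |φ' c|) (hw1 : |φ' w| ≤ ρ / 2)
    (hcmem : c ∈ Set.Icc lo hi) (hwmem : w ∈ Set.Icc lo hi)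
    (hsub : Set.Icc lo hi ⊆ Set.Icc (0:ℝ) 1) :
    ∃ s ∈ Set.Icc lo hi, s ∈ Er φ' 0 1 ρ ∧ |φ' s| = 3 * ρ / 4 := by
  have hcc : ContinuousOn (fun y => |φ' y|) (Set.uIcc c w) :=
    (hcont.mono ((Set.uIcc_subset_Icc hcmem hwmem).trans hsub)).abs
  have hmem : (3 * ρ / 4) ∈ Set.uIcc (|φ' c|) (|φ' w|) :=
    Set.mem_uIcc.mpr (Or.inr ⟨by linarith, by linarith⟩)
  obtain ⟨s, hs, hseq⟩ := intermediate_value_uIcc hcc hmem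
  have hsmem : s ∈ Set.Icc lo hi := (Set.uIcc_subset_Icc hcmem hwmem) hs
  have hseq' : |φ' s| = 3 * ρ / 4 := hseq
  exact ⟨s, hsmem, ⟨hsub hsmem, by rw [hseq']; constructor <;> linarith⟩, hseq'⟩

end Analysis


set_option maxHeartbeats 2000000 in
/-- if `φ ∈ C¹[0,1]` and `N(r;φ) ≥ 𝒩 ≥ 20`, then
`N((𝒩/8)r; φ') ≥ 𝒩/16`. -/
theorem Ncount_deriv_lower (r : ℝ) (hr : 0 < r) (φ φ' : ℝ → ℝ)
    (hderiv : ∀ t ∈ Set.Icc (0:ℝ) 1, HasDerivWithinAt φ (φ' t) (Set.Icc (0:ℝ) 1) t)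
    (hcont : ContinuousOn φ' (Set.Icc (0:ℝ) 1))
    (N : ℝ) (hN20 : 20 ≤ N) (hN : N ≤ (Ncount φ 0 1 r : ℝ)) :
    N / 16 ≤ (Ncount φ' 0 1 (N / 8 * r) : ℝ) := by
  classical
  have hN0 : (0:ℝ) < N := by linarith
  set ρ : ℝ := N / 8 * r with hρdef
  have hρ : 0 < ρ := by positivity
  have hφc : ContinuousOn φ (Set.Icc (0:ℝ) 1) := fun t ht => (hderiv t ht).continuousWithinAt
  set M : ℕ := Ncount φ 0 1 r with hMdef
  have hNM : N ≤ (M : ℝ) := hN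
  have hM20 : 20 ≤ M := by
    by_contra h
    push_neg at h
    have : (M : ℝ) < 20 := by exact_mod_cast h
    linarith
  have hMfin : (It φ 0 1 r '' Er φ 0 1 r).Finite := image_finite hφc hr
  -- choose representatives for all intervals
  have hrep : ∀ Q ∈ It φ 0 1 r '' Er φ 0 1 r, ∃ x, x ∈ Er φ 0 1 r ∧ It φ 0 1 r x = Q := by
    intro Q hQ
    obtain ⟨x, hx, hxQ⟩ := hQ
    exact ⟨x, hx, hxQ⟩
  choose! τ hτEr hτIt using hrep
  set F : Finset ℝ := hMfin.toFinset.image τ with hFdef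
  have hmemF : ∀ x ∈ F, ∃ Q ∈ It φ 0 1 r '' Er φ 0 1 r, τ Q = x := by
    intro x hx
    rw [hFdef] at hx
    simp only [Finset.mem_image, Set.Finite.mem_toFinset] at hx
    exact hx
  have hFer : ∀ x ∈ F, x ∈ Er φ 0 1 r := by
    intro x hx
    obtain ⟨Q, hQ, rfl⟩ := hmemF x hx
    exact hτEr Q hQ
  have hinj : ∀ x ∈ F, ∀ y ∈ F, x ≠ y → It φ 0 1 r x ≠ It φ 0 1 r y := by
    intro x hx y hy hxy heq
    obtain ⟨Q, hQ, rfl⟩ := hmemF x hx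
    obtain ⟨Q', hQ', rfl⟩ := hmemF y hy
    rw [hτIt Q hQ, hτIt Q' hQ'] at heq
    exact hxy (by rw [heq])
  have hcardF : F.card = M := by
    rw [hFdef, Finset.card_image_of_injOn (by
      intro a ha b hb hab
      rw [← hτIt a (hMfin.mem_toFinset.mp ha), ← hτIt b (hMfin.mem_toFinset.mp hb), hab])]
    rw [hMdef]
    unfold Ncount
    rw [Set.ncard_eq_toFinset_card _ hMfin]
  -- split into short interior, long interior, and boundary intervals
  set G : Finset ℝ := F.filter (fun x => leftStop φ 0 r x ≠ 0 ∧ rightStop φ 1 r x ≠ 1 ∧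
      rightStop φ 1 r x - leftStop φ 0 r x ≤ 2/N) with hGdef
  set Lf : Finset ℝ := F.filter (fun x => leftStop φ 0 r x ≠ 0 ∧ rightStop φ 1 r x ≠ 1 ∧
      ¬ (rightStop φ 1 r x - leftStop φ 0 r x ≤ 2/N)) with hLdef
  set K := G.card with hKdef
  have hG1 : (F.filter (fun x => leftStop φ 0 r x = 0)).card ≤ 1 := by
    apply Finset.card_le_one.mpr
    intro a ha b hb
    rw [Finset.mem_filter] at ha hb
    by_contra hab
    exact hinj a ha.1 b hb.1 hab
      (It_eq_of_leftStop_eq_zero hφc hr (hFer a ha.1) (hFer b hb.1) ha.2 hb.2)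
  have hG2 : (F.filter (fun x => rightStop φ 1 r x = 1)).card ≤ 1 := by
    apply Finset.card_le_one.mpr
    intro a ha b hb
    rw [Finset.mem_filter] at ha hb
    by_contra hab
    exact hinj a ha.1 b hb.1 hab
      (It_eq_of_rightStop_eq_one hφc hr (hFer a ha.1) (hFer b hb.1) ha.2 hb.2)
  have hsplit : M ≤ K + Lf.card + 2 := by
    have hsub : F ⊆ G ∪ Lf ∪ F.filter (fun x => leftStop φ 0 r x = 0)
        ∪ F.filter (fun x => rightStop φ 1 r x = 1) := by
      intro x hx
      simp only [Finset.mem_union, hGdef, hLdef, Finset.mem_filter]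
      by_cases h1 : leftStop φ 0 r x = 0
      · exact Or.inl (Or.inr ⟨hx, h1⟩)
      · by_cases h2 : rightStop φ 1 r x = 1
        · exact Or.inr ⟨hx, h2⟩
        · by_cases h3 : rightStop φ 1 r x - leftStop φ 0 r x ≤ 2/N
          · exact Or.inl (Or.inl (Or.inl ⟨hx, h1, h2, h3⟩))
          · exact Or.inl (Or.inl (Or.inr ⟨hx, h1, h2, h3⟩))
    calc M = F.card := hcardF.symm
      _ ≤ _ := Finset.card_le_card hsub
      _ ≤ K + Lf.card + 2 := by
          have u1 := Finset.card_union_le (G ∪ Lf ∪ F.filter (fun x => leftStop φ 0 r x = 0))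
            (F.filter (fun x => rightStop φ 1 r x = 1))
          have u2 := Finset.card_union_le (G ∪ Lf) (F.filter (fun x => leftStop φ 0 r x = 0))
          have u3 := Finset.card_union_le G Lf
          omega
  -- the long intervals are few
  have hLcard : 2 * Lf.card < M ∨ Lf.card = 0 := by
    rcases Finset.eq_empty_or_nonempty Lf with h | h
    · right; rw [h]; rfl
    · left
      have hsum := sum_len_le_one hφc hr Lf
        (fun x hx => hFer x (Finset.mem_filter.mp (hLdef ▸ hx)).1)
        (fun x hx y hy hxy => hinj x (Finset.mem_filter.mp (hLdef ▸ hx)).1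
          y (Finset.mem_filter.mp (hLdef ▸ hy)).1 hxy)
      have hstrict : (Lf.card : ℝ) * (2/N) < 1 := by
        calc (Lf.card : ℝ) * (2/N) = ∑ _x ∈ Lf, (2/N) := by rw [Finset.sum_const, nsmul_eq_mul]
          _ < ∑ x ∈ Lf, (rightStop φ 1 r x - leftStop φ 0 r x) := by
              apply Finset.sum_lt_sum_of_nonempty h
              intro x hx
              have := (Finset.mem_filter.mp (hLdef ▸ hx)).2.2.2
              push_neg at this
              exact this
          _ ≤ 1 := hsum
      have h2L : (2 * Lf.card : ℝ) < N := by
        have h := mul_lt_mul_of_pos_left hstrict hN0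
        rw [mul_one] at h
        have heqq : N * ((Lf.card:ℝ) * (2/N)) = 2 * Lf.card := by field_simp
        rw [heqq] at h
        exact h
      have : (2 * Lf.card : ℝ) < (M:ℝ) := lt_of_lt_of_le h2L hNM
      exact_mod_cast this
  set d' : ℕ := (K - 3)/6 + 1 with hd'def
  have harith : 9 ≤ K ∧ M ≤ 16 * d' ∧ 6 * (d' - 1) ≤ K - 3 := by
    rcases hLcard with h | h <;> omega
  -- sorted enumeration of the short interior intervals
  set e := G.orderIsoOfFin hKdef.symm with hedef
  set t : Fin K → ℝ := fun i => (e i : ℝ) with htdef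
  have htmem : ∀ i, t i ∈ G := fun i => (e i).2
  have htmono : ∀ i j : Fin K, i < j → t i < t j := by
    intro i j hij
    exact Subtype.coe_lt_coe.mpr (e.lt_iff_lt.mpr hij)
  have hGprop : ∀ i : Fin K, t i ∈ Er φ 0 1 r ∧ leftStop φ 0 r (t i) ≠ 0 ∧
      rightStop φ 1 r (t i) ≠ 1 ∧ rightStop φ 1 r (t i) - leftStop φ 0 r (t i) ≤ 2/N := by
    intro i
    have := Finset.mem_filter.mp (hGdef ▸ htmem i)
    exact ⟨hFer _ this.1, this.2⟩
  have htF : ∀ i : Fin K, t i ∈ F := fun i => (Finset.mem_filter.mp (hGdef ▸ htmem i)).1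
  have horder : ∀ i j : Fin K, i < j →
      IsBad φ r (rightStop φ 1 r (t i)) ∧ t i < rightStop φ 1 r (t i) ∧
      rightStop φ 1 r (t i) ≤ leftStop φ 0 r (t j) ∧ leftStop φ 0 r (t j) < t j ∧
      IsBad φ r (leftStop φ 0 r (t j)) ∧ rightStop φ 1 r (t i) ≠ 1 ∧
      leftStop φ 0 r (t j) ≠ 0 := by
    intro i j hij
    have hne : It φ 0 1 r (t i) ≠ It φ 0 1 r (t j) :=
      hinj _ (htF i) _ (htF j) (ne_of_lt (htmono i j hij))
    exact stops_order hφc hr (hGprop i).1 (hGprop j).1 (htmono i j hij) hne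
  -- basic positivity facts
  have hstop0 : ∀ i : Fin K, 0 < leftStop φ 0 r (t i) := by
    intro i
    have h := (leftStop_spec (ρ := r) hφc (hGprop i).1.1).1.1
    exact lt_of_le_of_ne h (Ne.symm (hGprop i).2.1)
  have hstop1 : ∀ i : Fin K, rightStop φ 1 r (t i) < 1 := by
    intro i
    have h := (rightStop_spec (ρ := r) hφc (hGprop i).1.1).1.2
    exact lt_of_le_of_ne h (hGprop i).2.2.1
  have htlt : ∀ i : Fin K, leftStop φ 0 r (t i) < t i ∧ t i < rightStop φ 1 r (t i) := by
    intro i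
    constructor
    · exact leftStop_lt hφc hr (hGprop i).1 (fun h0 => by
        have h2 : leftStop φ 0 r (t i) ≤ 0 :=
          le_trans (leftStop_spec (ρ := r) hφc (hGprop i).1.1).1.2 (le_of_eq h0)
        linarith [hstop0 i])
    · exact lt_rightStop hφc hr (hGprop i).1 (fun h1 => by
        have h2 : (1:ℝ) ≤ rightStop φ 1 r (t i) :=
          le_trans (le_of_eq h1.symm) (rightStop_spec (ρ := r) hφc (hGprop i).1.1).1.1
        linarith [hstop1 i])
  -- large derivative points
  have hc : ∀ i : Fin K, ∃ cc, cc ∈ Set.Ioo (leftStop φ 0 r (t i)) (t i) ∧ ρ ≤ |φ' cc| := by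
    intro i
    obtain ⟨cc, hcc, hslope⟩ := exists_large_deriv hr hderiv (hGprop i).1 (hGprop i).2.1
    refine ⟨cc, hcc, ?_⟩
    have hlen : t i - leftStop φ 0 r (t i) ≤ 2/N := by
      have := (hGprop i).2.2.2
      have h2 := (htlt i).2
      linarith
    have h1 : |φ' cc| * (t i - leftStop φ 0 r (t i)) ≤ |φ' cc| * (2/N) :=
      mul_le_mul_of_nonneg_left hlen (abs_nonneg _)
    have h2 : r / 4 ≤ |φ' cc| * (2/N) := le_trans hslope h1
    have h3 : (N/2) * (r/4) ≤ (N/2) * (|φ' cc| * (2/N)) :=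
      mul_le_mul_of_nonneg_left h2 (by positivity)
    have h4 : (N/2) * (|φ' cc| * (2/N)) = |φ' cc| := by
      field_simp
    have h5 : (N/2) * (r/4) = N/8*r := by ring
    rw [h4, h5] at h3
    exact h3
  choose c hcmem hclarge using hc
  -- small derivative points between triples
  have hw : ∀ (i : Fin K) (h2 : i.val + 2 < K),
      ∃ w ∈ Set.Icc (t i) (t ⟨i.val + 2, h2⟩), |φ' w| ≤ ρ/2 := by
    intro i h2
    by_contra hcon
    push_neg at hcon
    have h1 : i.val + 1 < K := by omega
    set i1 : Fin K := ⟨i.val + 1, h1⟩ with hi1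
    set i2 : Fin K := ⟨i.val + 2, h2⟩ with hi2
    have hii1 : i < i1 := by
      rw [Fin.lt_def]
      show i.val < i.val + 1
      omega
    have hi1i2 : i1 < i2 := by
      rw [Fin.lt_def]
      show i.val + 1 < i.val + 2
      omega
    obtain ⟨hbad1, hlt1, hle1, hlt1', -, -, -⟩ := horder i i1 hii1
    obtain ⟨hbad2, hlt2, hle2, hlt2', -, -, -⟩ := horder i1 i2 hi1i2
    refine no_span hr hderiv hcont (hGprop i).1 (hGprop i1).1 (hGprop i2).1
      (le_of_lt hlt1) (by linarith) (le_of_lt hlt2) (by linarith) hbad1 hbad2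
      (by linarith [hstop0 i, (htlt i).1]) (by linarith [hstop1 i2, (htlt i2).2]) ?_
    intro x hx hx0
    have := hcon x hx
    rw [hx0] at this
    simp at this
    linarith
  -- band points for φ'
  obtain ⟨hK9, hM16, hd6⟩ := harith
  have hidx : ∀ j : Fin d', 6 * j.val + 2 < K := by
    intro j
    have := j.2
    omega
  have hidx0 : ∀ j : Fin d', 6 * j.val < K := fun j => by have := hidx j; omega
  have hs : ∀ j : Fin d', ∃ s,
      s ∈ Set.Icc (leftStop φ 0 r (t ⟨6*j.val, hidx0 j⟩)) (t ⟨6*j.val + 2, hidx j⟩) ∧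
      s ∈ Er φ' 0 1 ρ := by
    intro j
    set i0 : Fin K := ⟨6*j.val, hidx0 j⟩ with hi0
    set i2 : Fin K := ⟨6*j.val + 2, hidx j⟩ with hi2'
    obtain ⟨w, hwmem, hwsmall⟩ := hw i0 (by rw [hi0]; exact hidx j)
    have hti0i2 : t i0 < t i2 := htmono i0 i2 (Fin.mk_lt_mk.mpr (by omega))
    have hA0 : 0 < leftStop φ 0 r (t i0) := hstop0 i0
    have hAt : leftStop φ 0 r (t i0) < t i0 := (htlt i0).1
    obtain ⟨s, hsmem, hsEr, -⟩ := exists_band_point hρ hcont (hclarge i0) hwsmall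
      (show c i0 ∈ Set.Icc (leftStop φ 0 r (t i0)) (t i2) from
        ⟨le_of_lt (hcmem i0).1, le_trans (le_of_lt (hcmem i0).2) (le_of_lt hti0i2)⟩)
      (show w ∈ Set.Icc (leftStop φ 0 r (t i0)) (t i2) from
        ⟨le_trans (le_of_lt hAt) hwmem.1, hwmem.2⟩)
      (Set.Icc_subset_Icc (le_of_lt hA0) (hGprop i2).1.1.2)
    exact ⟨s, hsmem, hsEr⟩
  choose s hsmem hsEr using hs
  -- the window argument: intervals of band points with indices j < j' are distinct
  have hpair : ∀ j j' : Fin d', j < j' → It φ' 0 1 ρ (s j) = It φ' 0 1 ρ (s j') → False := by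
    intro j j' hjj' heq
    have hjv : j.val + 1 ≤ j'.val := hjj'
    have hj'2 := j'.2
    have hb5 : 6*j.val + 5 < K := by omega
    have hb3 : 6*j.val + 3 < K := by omega
    have hb4 : 6*j.val + 4 < K := by omega
    set i2 : Fin K := ⟨6*j.val + 2, hidx j⟩ with hi2
    set i3 : Fin K := ⟨6*j.val + 3, hb3⟩ with hi3
    set i4 : Fin K := ⟨6*j.val + 4, hb4⟩ with hi4
    set i5 : Fin K := ⟨6*j.val + 5, hb5⟩ with hi5
    set i0' : Fin K := ⟨6*j'.val, hidx0 j'⟩ with hi0'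
    obtain ⟨-, -, h23, h23', -, -, -⟩ := horder i2 i3 (by rw [Fin.lt_def]; show 6*j.val+2 < 6*j.val+3; omega)
    obtain ⟨hbad3, hlt3, h34, h34', -, -, -⟩ := horder i3 i4 (by rw [Fin.lt_def]; show 6*j.val+3 < 6*j.val+4; omega)
    obtain ⟨hbad4, hlt4, h45, h45', -, -, -⟩ := horder i4 i5 (by rw [Fin.lt_def]; show 6*j.val+4 < 6*j.val+5; omega)
    obtain ⟨-, hlt5, h50, -, -, -, -⟩ := horder i5 i0' (by rw [Fin.lt_def]; show 6*j.val+5 < 6*j'.val; omega)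
    -- membership of both band points in the same φ'-interval
    have m1 : s j ∈ It φ' 0 1 ρ (s j) := self_mem_It hcont hρ (hsEr j)
    have m2 : s j' ∈ It φ' 0 1 ρ (s j) := by
      rw [heq]; exact self_mem_It hcont hρ (hsEr j')
    have le1 := mem_It_le m1
    have le2 := mem_It_le m2
    -- position chains
    have hsj_le : s j ≤ t i2 := (hsmem j).2
    have hsj'_ge : leftStop φ 0 r (t i0') ≤ s j' := (hsmem j').1
    have hchain1 : s j < t i3 := lt_of_le_of_lt hsj_le (by linarith [(htlt i2).2, (htlt i3).1])
    have hchain2 : t i5 < s j' := by linarith [(htlt i5).2]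
    -- all points of [t i3, t i5] are good for φ' at level ρ
    have hgood : ∀ x ∈ Set.Icc (t i3) (t i5), φ' x ≠ 0 := by
      intro x hx hx0
      have hxlt : leftStop φ' 0 ρ (s j) < x := lt_of_le_of_lt (le1.1.trans hsj_le)
        (by linarith [(htlt i2).2, (htlt i3).1, hx.1])
      have hxgt : x < rightStop φ' 1 ρ (s j) := by
        calc x ≤ t i5 := hx.2
          _ < s j' := hchain2
          _ ≤ _ := le2.2
      have := good_between hcont (hsEr j) hxlt hxgt
      rw [IsBad, hx0] at this
      simp at this
      linarith
    -- contradiction via no_span on the triple (t i3, t i4, t i5)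
    exact no_span hr hderiv hcont (hGprop i3).1 (hGprop i4).1 (hGprop i5).1
      (le_of_lt hlt3) (by linarith [(htlt i4).1]) (le_of_lt hlt4) (by linarith [(htlt i5).1])
      hbad3 hbad4
      (by linarith [hstop0 i3, (htlt i3).1]) (by linarith [hstop1 i5, (htlt i5).2])
      hgood
  have hinj' : Function.Injective (fun j : Fin d' => It φ' 0 1 ρ (s j)) := by
    intro j j' heq
    by_contra hne
    rcases lt_trichotomy j j' with h | h | h
    · exact hpair j j' h heq
    · exact hne h
    · exact hpair j' j h heq.symm
  -- conclude
  set Fd : Finset (Set ℝ) := Finset.univ.image (fun j : Fin d' => It φ' 0 1 ρ (s j)) with hFd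
  have hFdcard : Fd.card = d' := by
    rw [hFd, Finset.card_image_of_injective _ hinj', Finset.card_univ, Fintype.card_fin]
  have hFdsub : ↑Fd ⊆ It φ' 0 1 ρ '' Er φ' 0 1 ρ := by
    intro Q hQ
    rw [hFd] at hQ
    simp only [Finset.coe_image, Finset.coe_univ, Set.image_univ, Set.mem_range] at hQ
    obtain ⟨j, rfl⟩ := hQ
    exact Set.mem_image_of_mem _ (hsEr j)
  have hfin' : (It φ' 0 1 ρ '' Er φ' 0 1 ρ).Finite := image_finite hcont hρ
  have hDle : d' ≤ Ncount φ' 0 1 ρ := by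
    unfold Ncount
    calc d' = Fd.card := hFdcard.symm
      _ = (↑Fd : Set (Set ℝ)).ncard := (Set.ncard_coe_finset Fd).symm
      _ ≤ _ := Set.ncard_le_ncard hFdsub hfin'
  have hfinal1 : (M:ℝ) ≤ 16 * (d':ℝ) := by exact_mod_cast hM16
  have hfinal2 : (d':ℝ) ≤ (Ncount φ' 0 1 ρ : ℝ) := by exact_mod_cast hDle
  linarith
end

section
/- Let φ be a smooth function on a compact interval I, let E = {t ∈ I : φ(t) = 0}, and let {I_k}_{k=1}^∞ be the connected components of I \ E. Then for every δ > 0, the sum Σ_{k=1}^∞ (sup_{I_k} |φ|)^δ is finite. -/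
open Set MeasureTheory
open scoped ENNReal

/-- If a `C^n` function on `[a,b]` has `n+1` distinct zeros in `[u,v] ⊆ [a,b]`, and its `n`-th
derivative (within `[a,b]`) is bounded by `M` on `[u,v]`, then `|f| ≤ M (v-u)^n` on `[u,v]`. -/
lemma rolle_bound (n : ℕ) : ∀ (f : ℝ → ℝ) {a b u v M : ℝ},
    ContDiffOn ℝ n f (Icc a b) → a < b → Icc u v ⊆ Icc a b →
    (∀ x ∈ Icc u v, |iteratedDerivWithin n f (Icc a b) x| ≤ M) →
    ∀ z : Fin (n+1) → ℝ, StrictMono z → (∀ i, z i ∈ Icc u v) → (∀ i, f (z i) = 0) →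
    ∀ t ∈ Icc u v, |f t| ≤ M * (v - u) ^ n := by
  induction n with
  | zero =>
    intro f a b u v M hf hab hsub hM z hz hzmem hzero t ht
    simpa using hM t ht
  | succ n IH =>
    intro f a b u v M hf hab hsub hM z hz hzmem hzero t ht
    have hud : UniqueDiffOn ℝ (Icc a b) := uniqueDiffOn_Icc hab
    set f' := derivWithin f (Icc a b) with hf'def
    have hf' : ContDiffOn ℝ n f' (Icc a b) := by
      apply hf.derivWithin hud
      exact_mod_cast le_refl _
    have hdiff : DifferentiableOn ℝ f (Icc a b) := by
      apply hf.differentiableOn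
      simp
    -- zeros of f'
    have hc : ∀ i : Fin (n+1), ∃ c ∈ Ioo (z i.castSucc) (z i.succ), f' c = 0 := by
      intro i
      have hlt : z i.castSucc < z i.succ := hz (by simp [Fin.lt_def])
      obtain ⟨c, hc, hc0⟩ := exists_deriv_eq_zero hlt
        (hf.continuousOn.mono (fun x hx => hsub ((Icc_subset_Icc
          (hzmem i.castSucc).1 (hzmem i.succ).2) hx))) ((hzero _).trans (hzero _).symm)
      refine ⟨c, hc, ?_⟩
      have hcin : Icc a b ∈ nhds c := by
        apply Icc_mem_nhds
        · exact lt_of_le_of_lt (hsub (hzmem i.castSucc)).1 hc.1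
        · exact lt_of_lt_of_le hc.2 (hsub (hzmem i.succ)).2
      rw [hf'def, derivWithin_of_mem_nhds hcin]
      exact hc0
    choose c hcmem hczero using hc
    have hcmono : StrictMono c := by
      intro i j hij
      calc c i < z i.succ := (hcmem i).2
        _ ≤ z j.castSucc := hz.monotone (by simp [Fin.le_def]; omega)
        _ < c j := (hcmem j).1
    have hcIcc : ∀ i, c i ∈ Icc u v := fun i =>
      ⟨le_trans (hzmem i.castSucc).1 (hcmem i).1.le, le_trans (hcmem i).2.le (hzmem i.succ).2⟩
    have hM' : ∀ x ∈ Icc u v, |iteratedDerivWithin n f' (Icc a b) x| ≤ M := by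
      intro x hx
      have := hM x hx
      rwa [iteratedDerivWithin_succ'] at this
    have IH' := IH f' hf' hab hsub hM' c hcmono hcIcc hczero
    -- MVT step
    have huv : u ≤ v := le_trans (hzmem 0).1 (hzmem 0).2
    have hMnn : 0 ≤ M := le_trans (abs_nonneg _) (hM (z 0) (hzmem 0))
    have key : |f t - f (z 0)| ≤ (M * (v - u) ^ n) * |t - z 0| := by
      have := Convex.norm_image_sub_le_of_norm_hasDerivWithin_le
        (f := f) (f' := f') (s := Icc u v) (C := M * (v - u) ^ n)
        (fun x hx => ((hdiff x (hsub hx)).hasDerivWithinAt).mono hsub)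
        (fun x hx => by simpa using IH' x hx) (convex_Icc u v) (hzmem 0) ht
      simpa [Real.norm_eq_abs] using this
    have habs : |t - z 0| ≤ v - u := by
      rw [abs_le]
      constructor <;> [skip; skip] <;>
        nlinarith [ht.1, ht.2, (hzmem 0).1, (hzmem 0).2]
    calc |f t| = |f t - f (z 0)| := by rw [hzero 0, sub_zero]
      _ ≤ (M * (v - u) ^ n) * |t - z 0| := key
      _ ≤ (M * (v - u) ^ n) * (v - u) := by
          apply mul_le_mul_of_nonneg_left habs
          have : (0:ℝ) ≤ v - u := by linarith
          positivity
      _ = M * (v - u) ^ (n + 1) := by ring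

/-- Sum of lengths of intervals inside `[a,b]` with multiplicity bounded by `N`. -/
lemma sum_length_le {a b : ℝ} {N : ℕ} {α v : ℕ → ℝ} (hab : a ≤ b)
    (hT : ∀ k, Ioo (α k) (v k) ⊆ Icc a b) (hle : ∀ k, α k ≤ v k)
    (hmult : ∀ (x : ℝ) (F : Finset ℕ), (∀ k ∈ F, x ∈ Ioo (α k) (v k)) → F.card ≤ N) :
    ∀ F : Finset ℕ, ∑ k ∈ F, (v k - α k) ≤ N * (b - a) := by
  classical
  intro F
  have key : ∑ k ∈ F, (volume (Ioo (α k) (v k))) ≤ (N : ℝ≥0∞) * volume (Icc a b) := by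
    have h1 : ∀ k, volume (Ioo (α k) (v k))
        = ∫⁻ x, (Ioo (α k) (v k)).indicator (fun _ => (1:ℝ≥0∞)) x := by
      intro k
      rw [lintegral_indicator measurableSet_Ioo]
      simp
    calc ∑ k ∈ F, volume (Ioo (α k) (v k))
        = ∫⁻ x, ∑ k ∈ F, (Ioo (α k) (v k)).indicator (fun _ => (1:ℝ≥0∞)) x := by
          rw [lintegral_finset_sum]
          · exact Finset.sum_congr rfl fun k _ => h1 k
          · exact fun k _ => (measurable_const.indicator measurableSet_Ioo)
      _ ≤ ∫⁻ x, (Icc a b).indicator (fun _ => (N:ℝ≥0∞)) x := by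
          apply lintegral_mono
          intro x
          by_cases hx : x ∈ Icc a b
          · rw [indicator_of_mem hx]
            simp only []
            show ∑ k ∈ F, (Ioo (α k) (v k)).indicator (fun _ => (1:ℝ≥0∞)) x ≤ (N:ℝ≥0∞)
            have : ∑ k ∈ F, (Ioo (α k) (v k)).indicator (fun _ => (1:ℝ≥0∞)) x
                = ((F.filter (fun k => x ∈ Ioo (α k) (v k))).card : ℝ≥0∞) := by
              rw [Finset.card_filter]
              push_cast
              apply Finset.sum_congr rfl
              intro k _
              by_cases h : x ∈ Ioo (α k) (v k) <;> simp [h]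
            rw [this]
            exact_mod_cast Nat.cast_le.2 (hmult x _ (fun k hk => (Finset.mem_filter.1 hk).2))
          · rw [indicator_of_notMem hx]
            have : ∀ k ∈ F, (Ioo (α k) (v k)).indicator (fun _ => (1:ℝ≥0∞)) x = 0 := by
              intro k _
              exact indicator_of_notMem (fun h => hx (hT k h)) _
            simp [Finset.sum_congr rfl this]
      _ = (N : ℝ≥0∞) * volume (Icc a b) := by
          rw [lintegral_indicator measurableSet_Icc]
          simp [mul_comm]
  have hvol : ∀ k, volume (Ioo (α k) (v k)) = ENNReal.ofReal (v k - α k) := fun k =>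
    Real.volume_Ioo
  rw [Real.volume_Icc] at key
  have : ENNReal.ofReal (∑ k ∈ F, (v k - α k)) ≤ ENNReal.ofReal ((N:ℝ) * (b - a)) := by
    rw [ENNReal.ofReal_sum_of_nonneg (fun k _ => sub_nonneg.2 (hle k))]
    calc ∑ k ∈ F, ENNReal.ofReal (v k - α k) = ∑ k ∈ F, volume (Ioo (α k) (v k)) := by
          exact Finset.sum_congr rfl fun k _ => (hvol k).symm
      _ ≤ (N : ℝ≥0∞) * ENNReal.ofReal (b - a) := key
      _ = ENNReal.ofReal ((N:ℝ) * (b - a)) := by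
          rw [ENNReal.ofReal_mul (by positivity)]
          simp
  rwa [ENNReal.ofReal_le_ofReal_iff (by nlinarith [Nat.cast_nonneg (α := ℝ) N])] at this

/-- Sjölin's lemma: let `φ` be smooth on a compact interval `[a,b]`,
`E = {φ = 0}`, and let `(J k)` enumerate (distinct) connected components of `[a,b] \ E`.
Then `Σ_k (sup_{J k} |φ|)^δ < ∞` for every `δ > 0`. -/
theorem sum_sup_pow_components_lt_top (a b : ℝ) (hab : a ≤ b) (φ : ℝ → ℝ)
    (hφ : ContDiffOn ℝ (⊤ : ℕ∞) φ (Set.Icc a b))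
    (E : Set ℝ) (hE : E = {t ∈ Set.Icc a b | φ t = 0})
    (J : ℕ → Set ℝ)
    (hJ : ∀ k, ∃ x ∈ Set.Icc a b \ E, J k = connectedComponentIn (Set.Icc a b \ E) x)
    (hJinj : Function.Injective J)
    (δ : ℝ) (hδ : 0 < δ) :
    Summable fun k => (sSup ((fun t => |φ t|) '' J k)) ^ δ := by
  classical
  set U : Set ℝ := Icc a b \ E with hU
  choose x hxU hJeq using hJ
  -- a < b
  have hab' : a < b := by
    rcases lt_or_eq_of_le hab with h | h
    · exact h
    · exfalso
      have h0 : x 0 = a := by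
        have := (hxU 0).1; rw [← h] at this
        have h1 := this.1; have h2 := this.2; linarith
      have h1 : x 1 = a := by
        have := (hxU 1).1; rw [← h] at this
        have h1 := this.1; have h2 := this.2; linarith
      have : J 0 = J 1 := by rw [hJeq 0, hJeq 1, h0, h1]
      exact absurd (hJinj this) (by norm_num)
  have hEclosed : IsClosed E := by
    rw [hE]
    have : {t ∈ Set.Icc a b | φ t = 0} = Icc a b ∩ φ ⁻¹' {0} := by
      ext t; simp
    rw [this]
    exact hφ.continuousOn.preimage_isClosed_of_isClosed isClosed_Icc isClosed_singleton
  have hJsub : ∀ k, J k ⊆ U := fun k => (hJeq k) ▸ connectedComponentIn_subset U (x k)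
  have hJx : ∀ k, x k ∈ J k := fun k => (hJeq k) ▸ mem_connectedComponentIn (hxU k)
  have hJne : ∀ k, (J k).Nonempty := fun k => ⟨x k, hJx k⟩
  have hJconn : ∀ k, IsPreconnected (J k) := fun k => by
    rw [hJeq k]
    exact (isConnected_connectedComponentIn_iff.2 (hxU k)).isPreconnected
  have hJord : ∀ k, OrdConnected (J k) := fun k => (hJconn k).ordConnected
  have hJmax : ∀ k (s : Set ℝ), IsPreconnected s → s ⊆ U → x k ∈ s → s ⊆ J k := by
    intro k s hs hsU hxs
    rw [hJeq k]
    exact hs.subset_connectedComponentIn hxs hsU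
  set α : ℕ → ℝ := fun k => sInf (J k) with hα
  set β : ℕ → ℝ := fun k => sSup (J k) with hβ
  have hbddA : ∀ k, BddAbove (J k) := fun k => ⟨b, fun y hy => ((hJsub k) hy).1.2⟩
  have hbddB : ∀ k, BddBelow (J k) := fun k => ⟨a, fun y hy => ((hJsub k) hy).1.1⟩
  have hαa : ∀ k, a ≤ α k := fun k => le_csInf (hJne k) (fun y hy => ((hJsub k) hy).1.1)
  have hβb : ∀ k, β k ≤ b := fun k => csSup_le (hJne k) (fun y hy => ((hJsub k) hy).1.2)
  have hmemαβ : ∀ k, ∀ t ∈ J k, α k ≤ t ∧ t ≤ β k := fun k t ht =>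
    ⟨csInf_le (hbddB k) ht, le_csSup (hbddA k) ht⟩
  have hαβ : ∀ k, α k ≤ β k := fun k => ((hmemαβ k (x k) (hJx k)).1).trans (hmemαβ k (x k) (hJx k)).2
  have hIoo : ∀ k, Ioo (α k) (β k) ⊆ J k := by
    intro k t ht
    obtain ⟨p, hp, hpt⟩ := exists_lt_of_csInf_lt (hJne k) ht.1
    obtain ⟨q, hq, htq⟩ := exists_lt_of_lt_csSup (hJne k) ht.2
    exact (hJord k).out hp hq ⟨hpt.le, htq.le⟩
  -- interior membership determines the component
  have hcomp_eq : ∀ k l (t : ℝ), t ∈ J k → t ∈ J l → k = l := by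
    intro k l t htk htl
    apply hJinj
    rw [hJeq k, hJeq l]
    have e1 : connectedComponentIn U (x k) = connectedComponentIn U t :=
      connectedComponentIn_eq (by rw [← hJeq k]; exact htk)
    have e2 : connectedComponentIn U (x l) = connectedComponentIn U t :=
      connectedComponentIn_eq (by rw [← hJeq l]; exact htl)
    rw [e1, e2]
  -- right endpoint is in E (or = b)
  have hβE : ∀ k, β k < b → β k ∈ E := by
    intro k hkb
    by_contra hβnE
    have hβIcc : β k ∈ Icc a b := ⟨(hαa k).trans (hαβ k), hβb k⟩
    have hβU : β k ∈ U := ⟨hβIcc, hβnE⟩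
    obtain ⟨ε, hε, hball⟩ := Metric.mem_nhds_iff.1 (hEclosed.isOpen_compl.mem_nhds hβnE)
    rw [Real.ball_eq_Ioo] at hball
    obtain ⟨β', hβ'J, hβ'gt⟩ := exists_lt_of_lt_csSup (hJne k) (show β k - ε < β k by linarith)
    set y := min (β k + ε/2) b with hy
    have hylb : β k < y := lt_min (by linarith) hkb
    have hβ'le : β' ≤ β k := (hmemαβ k β' hβ'J).2
    have hIccsub : Icc β' y ⊆ U := by
      intro t ht
      refine ⟨⟨((hJsub k) hβ'J).1.1.trans ht.1, ht.2.trans (min_le_right _ _)⟩, ?_⟩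
      apply hball
      constructor
      · linarith [ht.1]
      · have : t ≤ β k + ε/2 := ht.2.trans (min_le_left _ _)
        linarith
    have hs : IsPreconnected (J k ∪ Icc β' y) :=
      IsPreconnected.union β' hβ'J ⟨le_refl _, hβ'le.trans hylb.le⟩ (hJconn k) isPreconnected_Icc
    have hsubJ : J k ∪ Icc β' y ⊆ J k :=
      hJmax k _ hs (union_subset (hJsub k) hIccsub) (Or.inl (hJx k))
    have : y ≤ β k := (hmemαβ k y (hsubJ (Or.inr ⟨hβ'le.trans hylb.le, le_refl _⟩))).2
    linarith
  -- sSup is injective on components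
  have hβinj : Function.Injective β := by
    intro k l hkl
    have key : ∀ i j : ℕ, β i = β j → ∀ p ∈ J i, ∀ q ∈ J j, ∀ t, p ≤ t → t ≤ q → t ∈ J i ∪ J j := by
      intro i j hij p hp q hq t hpt htq
      rcases eq_or_lt_of_le htq with h | h
      · exact Or.inr (h ▸ hq)
      · have : t < sSup (J i) := lt_of_lt_of_le h ((hij ▸ (hmemαβ j q hq).2 : q ≤ β i))
        obtain ⟨s', hs', hts'⟩ := exists_lt_of_lt_csSup (hJne i) this
        exact Or.inl ((hJord i).out hp hs' ⟨hpt, hts'.le⟩)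
    have hord : OrdConnected (J k ∪ J l) := by
      constructor
      rintro p (hp | hp) q (hq | hq) t ht
      · exact Or.inl ((hJord k).out hp hq ht)
      · exact key k l hkl p hp q hq t ht.1 ht.2
      · rcases key l k hkl.symm p hp q hq t ht.1 ht.2 with h | h
        · exact Or.inr h
        · exact Or.inl h
      · exact Or.inr ((hJord l).out hp hq ht)
    have hsubU : J k ∪ J l ⊆ U := union_subset (hJsub k) (hJsub l)
    have h1 : J k ∪ J l ⊆ J k := hJmax k _ hord.isPreconnected hsubU (Or.inl (hJx k))
    have h2 : J k ∪ J l ⊆ J l := hJmax l _ hord.isPreconnected hsubU (Or.inr (hJx l))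
    exact hJinj (subset_antisymm (subset_union_left.trans h2) (subset_union_right.trans h1))
  -- choice of n and bounds
  set n : ℕ := ⌈1/δ⌉₊ with hn
  have hnpos : 0 < n := Nat.ceil_pos.2 (by positivity)
  have hn1 : (1:ℝ) ≤ (n:ℝ) * δ := by
    have h1 : 1/δ ≤ (n:ℝ) := Nat.le_ceil (1/δ)
    rw [div_le_iff₀ hδ] at h1
    linarith
  have hud : UniqueDiffOn ℝ (Icc a b) := uniqueDiffOn_Icc hab'
  have hφn : ContDiffOn ℝ n φ (Icc a b) := hφ.of_le (by exact_mod_cast le_top)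
  -- global bounds
  obtain ⟨M, hM⟩ := isCompact_Icc.exists_bound_of_continuousOn
    (hφn.continuousOn_iteratedDerivWithin le_rfl hud)
  have hM' : ∀ t ∈ Icc a b, |iteratedDerivWithin n φ (Icc a b) t| ≤ M := by
    intro t ht; simpa [Real.norm_eq_abs] using hM t ht
  have hM0 : 0 ≤ M := le_trans (abs_nonneg _) (hM' a ⟨le_refl _, hab⟩)
  obtain ⟨C₀, hC₀⟩ := isCompact_Icc.exists_bound_of_continuousOn hφ.continuousOn
  have hC₀' : ∀ t ∈ Icc a b, |φ t| ≤ C₀ := by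
    intro t ht; simpa [Real.norm_eq_abs] using hC₀ t ht
  have hC₀0 : 0 ≤ C₀ := le_trans (abs_nonneg _) (hC₀' a ⟨le_refl _, hab⟩)
  set m : ℕ → ℝ := fun k => sSup ((fun t => |φ t|) '' J k) with hm
  have hmbdd : ∀ k, BddAbove ((fun t => |φ t|) '' J k) := by
    intro k
    refine ⟨C₀, ?_⟩
    rintro y ⟨t, ht, rfl⟩
    exact hC₀' t ((hJsub k) ht).1
  have hm0 : ∀ k, 0 ≤ m k := fun k =>
    le_trans (abs_nonneg _) (le_csSup (hmbdd k) ⟨x k, hJx k, rfl⟩)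
  have hmC₀ : ∀ k, m k ≤ C₀ := fun k =>
    Real.sSup_le (by rintro y ⟨t, ht, rfl⟩; exact hC₀' t ((hJsub k) ht).1) hC₀0
  -- the window sets
  set V : ℕ → Set ℝ := fun k =>
    {w | w ∈ Icc (β k) b ∧ (E ∩ Ioo (β k) w).Finite ∧ (E ∩ Ioo (β k) w).ncard < n} with hV
  have hVmem : ∀ k, β k ∈ V k := by
    intro k
    refine ⟨⟨le_refl _, hβb k⟩, ?_, ?_⟩ <;> simp [hnpos]
  have hVne : ∀ k, (V k).Nonempty := fun k => ⟨β k, hVmem k⟩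
  have hVbdd : ∀ k, BddAbove (V k) := fun k => ⟨b, fun w hw => hw.1.2⟩
  set v : ℕ → ℝ := fun k => sSup (V k) with hv
  have hβv : ∀ k, β k ≤ v k := fun k => le_csSup (hVbdd k) (hVmem k)
  have hvb : ∀ k, v k ≤ b := fun k => csSup_le (hVne k) (fun w hw => hw.1.2)
  -- for points strictly below v k, few zeros
  have hfew : ∀ k (t : ℝ), t < v k → (E ∩ Ioo (β k) t).Finite ∧ (E ∩ Ioo (β k) t).ncard < n := by
    intro k t ht
    obtain ⟨u, hu, htu⟩ := exists_lt_of_lt_csSup (hVne k) ht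
    have hsub : E ∩ Ioo (β k) t ⊆ E ∩ Ioo (β k) u :=
      inter_subset_inter_right _ (Ioo_subset_Ioo le_rfl htu.le)
    exact ⟨hu.2.1.subset hsub, lt_of_le_of_lt (Set.ncard_le_ncard hsub hu.2.1) hu.2.2⟩
  -- extraction of many zeros beyond v k
  have hmany : ∀ k (w : ℝ), w ∈ Icc (β k) b → w ∉ V k →
      ∃ S : Finset ℝ, ↑S ⊆ E ∩ Ioo (β k) w ∧ S.card = n := by
    intro k w hwIcc hwV
    by_cases hfin : (E ∩ Ioo (β k) w).Finite
    · have hcard : n ≤ (E ∩ Ioo (β k) w).ncard := by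
        by_contra h
        exact hwV ⟨hwIcc, hfin, by omega⟩
      obtain ⟨t, hts, htcard⟩ := Set.exists_subset_card_eq hcard
      have htfin : t.Finite := hfin.subset hts
      refine ⟨htfin.toFinset, by simpa using hts, ?_⟩
      rw [← Set.ncard_eq_toFinset_card t htfin, htcard]
    · obtain ⟨t, hts, htfin, htcard⟩ := Set.Infinite.exists_subset_ncard_eq hfin n
      refine ⟨htfin.toFinset, by simpa using hts, ?_⟩
      rw [← Set.ncard_eq_toFinset_card t htfin, htcard]
  -- main analytic bound for good indices
  have hgood : ∀ k, v k < b → m k ≤ M * (v k - α k) ^ n := by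
    intro k hk
    have hβkE : β k ∈ E := hβE k (lt_of_le_of_lt (hβv k) hk)
    have hεbound : ∀ ε ∈ Ioo (0:ℝ) (b - v k), m k ≤ M * (v k + ε - α k) ^ n := by
      intro ε hε
      obtain ⟨hε1, hε2⟩ := hε
      set w := v k + ε with hw
      have hwb : w ≤ b := by rw [hw]; linarith
      have hwIcc : w ∈ Icc (β k) b := ⟨by have := hβv k; rw [hw]; linarith, hwb⟩
      have hwV : w ∉ V k := by
        intro hmem
        have h3 := le_csSup (hVbdd k) hmem
        rw [hw] at h3
        have : v k + ε ≤ v k := h3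
        linarith
      obtain ⟨S, hSsub, hScard⟩ := hmany k w hwIcc hwV
      have hβnotin : β k ∉ S := by
        intro h
        exact absurd (hSsub h).2.1 (lt_irrefl _)
      set S' : Finset ℝ := insert (β k) S with hS'
      have hS'card : S'.card = n + 1 := by
        rw [hS', Finset.card_insert_of_notMem hβnotin, hScard]
      set e := S'.orderIsoOfFin hS'card with he
      set z : Fin (n+1) → ℝ := fun i => (e i : ℝ) with hz
      have hzmono : StrictMono z := fun i j hij => e.strictMono hij
      have hzS' : ∀ i, z i ∈ S' := fun i => (e i).2
      have hzE : ∀ i, z i ∈ E := by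
        intro i
        rcases Finset.mem_insert.1 (hzS' i) with h | h
        · rw [h]; exact hβkE
        · exact (hSsub h).1
      have hzIcc : ∀ i, z i ∈ Icc (α k) w := by
        intro i
        rcases Finset.mem_insert.1 (hzS' i) with h | h
        · rw [h]
          exact ⟨hαβ k, by have := hβv k; rw [hw]; linarith⟩
        · have h2 := (hSsub h).2
          exact ⟨(hαβ k).trans h2.1.le, h2.2.le⟩
      have hzero : ∀ i, φ (z i) = 0 := by
        intro i
        have := hzE i
        rw [hE] at this
        exact this.2
      have hIccsub2 : Icc (α k) w ⊆ Icc a b := Icc_subset_Icc (hαa k) hwb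
      have hbd := rolle_bound n φ hφn hab' hIccsub2
        (fun t ht => hM' t (hIccsub2 ht)) z hzmono hzIcc hzero
      have hwα : 0 ≤ w - α k := by
        have h1 := hαβ k; have h2 := hβv k; rw [hw]; linarith
      apply Real.sSup_le
      · rintro y ⟨t, ht, rfl⟩
        apply hbd
        have h1 := (hmemαβ k t ht).1
        have h2 := (hmemαβ k t ht).2
        exact ⟨h1, by have := hβv k; rw [hw]; linarith⟩
      · positivity
    -- pass to the limit ε → 0⁺
    have htend : Filter.Tendsto (fun ε : ℝ => M * (v k + ε - α k) ^ n)
        (nhdsWithin 0 (Ioi 0)) (nhds (M * (v k - α k) ^ n)) := by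
      have hcont : Continuous fun ε : ℝ => M * (v k + ε - α k) ^ n :=
        continuous_const.mul (((continuous_const.add continuous_id).sub continuous_const).pow n)
      have h0 := hcont.tendsto 0
      have h2 : M * (v k + 0 - α k) ^ n = M * (v k - α k) ^ n := by ring_nf
      rw [h2] at h0
      exact h0.mono_left nhdsWithin_le_nhds
    refine ge_of_tendsto htend ?_
    filter_upwards [Ioo_mem_nhdsGT_of_mem (⟨le_refl _, sub_pos.2 hk⟩ : (0:ℝ) ∈ Ico 0 (b - v k))]
      with ε hε using hεbound ε hε
  -- bad indices: few zeros all the way to b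
  have hbadfew : ∀ k, v k = b → (E ∩ Ioo (β k) b).Finite ∧ (E ∩ Ioo (β k) b).ncard < n := by
    intro k hk
    by_contra hcon
    have hbig : ∃ S : Finset ℝ, ↑S ⊆ E ∩ Ioo (β k) b ∧ S.card = n := by
      by_cases hfin : (E ∩ Ioo (β k) b).Finite
      · have hcard : n ≤ (E ∩ Ioo (β k) b).ncard := by
          by_contra h
          exact hcon ⟨hfin, by omega⟩
        obtain ⟨t, hts, htcard⟩ := Set.exists_subset_card_eq hcard
        have htfin : t.Finite := hfin.subset hts
        exact ⟨htfin.toFinset, by simpa using hts,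
          by rw [← Set.ncard_eq_toFinset_card t htfin, htcard]⟩
      · obtain ⟨t, hts, htfin, htcard⟩ := Set.Infinite.exists_subset_ncard_eq hfin n
        exact ⟨htfin.toFinset, by simpa using hts,
          by rw [← Set.ncard_eq_toFinset_card t htfin, htcard]⟩
    obtain ⟨S, hSsub, hScard⟩ := hbig
    have hSne : S.Nonempty := Finset.card_pos.1 (hScard ▸ hnpos)
    set w' := (S.max' hSne + b) / 2 with hw'
    have hmaxb : S.max' hSne < b := (hSsub (S.max'_mem hSne)).2.2
    have hw'b : w' < b := by rw [hw']; linarith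
    obtain ⟨u, hu, hw'u⟩ := exists_lt_of_lt_csSup (hVne k) (show w' < v k by rw [hk]; exact hw'b)
    have hSsub2 : ↑S ⊆ E ∩ Ioo (β k) u := by
      intro s hs
      refine ⟨(hSsub hs).1, (hSsub hs).2.1, ?_⟩
      have : s ≤ S.max' hSne := S.le_max' s hs
      have : s ≤ w' := by rw [hw']; linarith
      linarith
    have : n ≤ (E ∩ Ioo (β k) u).ncard := by
      calc n = S.card := hScard.symm
        _ = (↑S : Set ℝ).ncard := (Set.ncard_coe_finset S).symm
        _ ≤ (E ∩ Ioo (β k) u).ncard := Set.ncard_le_ncard hSsub2 hu.2.1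
    have h2 := hu.2.2
    omega
  -- the set of bad indices is finite
  have hbadcard : ∀ F : Finset ℕ, (∀ k ∈ F, v k = b) → F.card ≤ n + 2 := by
    intro F hF
    set G : Finset ℝ := F.image β with hG
    have hGcard : G.card = F.card := Finset.card_image_of_injective F hβinj
    set G' : Finset ℝ := G.erase b with hG'
    have hG'card : G.card - 1 ≤ G'.card := Finset.pred_card_le_card_erase
    rcases Finset.eq_empty_or_nonempty G' with hG'e | hG'ne
    · -- G ⊆ {b}
      have : G.card ≤ 1 := by
        by_contra h
        obtain ⟨g, hg⟩ := Finset.card_pos.1 (show 0 < G'.card by omega)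
        simp [hG'e] at hg
      omega
    · set βs := G'.min' hG'ne with hβs
      have hβsG' : βs ∈ G' := G'.min'_mem hG'ne
      have hβsG : βs ∈ G := Finset.mem_of_mem_erase hβsG'
      obtain ⟨ks, hksF, hksβ⟩ := Finset.mem_image.1 hβsG
      have hβsb : βs < b := lt_of_le_of_ne (hksβ ▸ hβb ks) (Finset.ne_of_mem_erase hβsG')
      have hksfew := hbadfew ks (hF ks hksF)
      rw [hksβ] at hksfew
      have hsubset : ↑(G'.erase βs) ⊆ E ∩ Ioo βs b := by
        intro g hg
        have hgG' : g ∈ G' := Finset.mem_of_mem_erase hg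
        have hgG : g ∈ G := Finset.mem_of_mem_erase hgG'
        obtain ⟨kg, hkgF, hkgβ⟩ := Finset.mem_image.1 hgG
        have hgb : g < b := lt_of_le_of_ne (hkgβ ▸ hβb kg) (Finset.ne_of_mem_erase hgG')
        have hgE : g ∈ E := hkgβ ▸ hβE kg (hkgβ ▸ hgb)
        have hgβs : βs < g :=
          lt_of_le_of_ne (G'.min'_le g hgG') (Ne.symm (Finset.ne_of_mem_erase hg))
        exact ⟨hgE, hgβs, hgb⟩
      have hcard2 : (G'.erase βs).card ≤ (E ∩ Ioo βs b).ncard := by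
        calc (G'.erase βs).card = (↑(G'.erase βs) : Set ℝ).ncard :=
              (Set.ncard_coe_finset _).symm
          _ ≤ (E ∩ Ioo βs b).ncard := Set.ncard_le_ncard hsubset hksfew.1
      have hce : (G'.erase βs).card = G'.card - 1 := Finset.card_erase_of_mem hβsG'
      have := hksfew.2
      omega
  have hbadfin : {k | v k = b}.Finite := by
    by_contra h
    obtain ⟨F, hFsub, hFcard⟩ := Set.Infinite.exists_subset_card_eq h (n + 3)
    have := hbadcard F (fun k hk => hFsub hk)
    omega
  -- bounded multiplicity of the windows
  have hmult : ∀ (t : ℝ) (F : Finset ℕ), (∀ k ∈ F, t ∈ Ioo (α k) (v k)) → F.card ≤ n + 2 := by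
    intro t F hF
    set F1 : Finset ℕ := F.filter (fun k => t ≤ β k) with hF1
    set F2 : Finset ℕ := F.filter (fun k => ¬ (t ≤ β k)) with hF2
    have hsplit : F1.card + F2.card = F.card := Finset.card_filter_add_card_filter_not _
    have hcard1 : F1.card ≤ 2 := by
      have hinj : Set.InjOn (fun k => decide (t = β k)) ↑F1 := by
        intro k1 hk1 k2 hk2 heq
        have hk1 : k1 ∈ F ∧ t ≤ β k1 := Finset.mem_filter.1 (Finset.mem_coe.1 hk1)
        have hk2 : k2 ∈ F ∧ t ≤ β k2 := Finset.mem_filter.1 (Finset.mem_coe.1 hk2)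
        simp only [decide_eq_decide] at heq
        by_cases hc : t = β k1
        · exact hβinj (hc.symm.trans (heq.mp hc))
        · have hc2 : ¬ t = β k2 := fun h => hc (heq.mpr h)
          have ht1 : t < β k1 := lt_of_le_of_ne hk1.2 hc
          have ht2 : t < β k2 := lt_of_le_of_ne hk2.2 hc2
          have hm1 : t ∈ J k1 := hIoo k1 ⟨(hF k1 hk1.1).1, ht1⟩
          have hm2 : t ∈ J k2 := hIoo k2 ⟨(hF k2 hk2.1).1, ht2⟩
          exact hcomp_eq k1 k2 t hm1 hm2
      have := Finset.card_le_card_of_injOn (fun k => decide (t = β k))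
        (fun k _ => Finset.mem_univ _) hinj
      simpa using this
    have hcard2 : F2.card ≤ n := by
      rcases Finset.eq_empty_or_nonempty F2 with he | hne
      · simp [he]
      · set G : Finset ℝ := F2.image β with hG
        have hGcard : G.card = F2.card := Finset.card_image_of_injective F2 hβinj
        have hGne : G.Nonempty := hne.image β
        set βs := G.min' hGne with hβs
        have hβsG : βs ∈ G := G.min'_mem hGne
        obtain ⟨ks, hksF2, hksβ⟩ := Finset.mem_image.1 hβsG
        have hks' : ks ∈ F ∧ ¬ (t ≤ β ks) := by simpa [hF2] using hksF2
        have htv : t < v ks := (hF ks hks'.1).2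
        have hksfew := hfew ks t htv
        rw [hksβ] at hksfew
        have hsubset : ↑(G.erase βs) ⊆ E ∩ Ioo βs t := by
          intro g hg
          have hgG : g ∈ G := Finset.mem_of_mem_erase hg
          obtain ⟨kg, hkgF2, hkgβ⟩ := Finset.mem_image.1 hgG
          have hkg' : kg ∈ F ∧ ¬ (t ≤ β kg) := by simpa [hF2] using hkgF2
          have hgt : g < t := by rw [← hkgβ]; exact lt_of_not_ge hkg'.2
          have hgb : g < b := lt_of_lt_of_le hgt (le_trans (le_of_lt htv) (hvb ks))
          have hgE : g ∈ E := hkgβ ▸ hβE kg (hkgβ ▸ hgb)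
          have hgβs : βs < g :=
            lt_of_le_of_ne (G.min'_le g hgG) (Ne.symm (Finset.ne_of_mem_erase hg))
          exact ⟨hgE, hgβs, hgt⟩
        have hcard3 : (G.erase βs).card ≤ (E ∩ Ioo βs t).ncard := by
          calc (G.erase βs).card = (↑(G.erase βs) : Set ℝ).ncard :=
                (Set.ncard_coe_finset _).symm
            _ ≤ (E ∩ Ioo βs t).ncard := Set.ncard_le_ncard hsubset hksfew.1
        have hce : (G.erase βs).card = G.card - 1 := Finset.card_erase_of_mem hβsG
        have hGpos : 0 < G.card := Finset.card_pos.2 hGne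
        have := hksfew.2
        omega
    omega
  -- summability of the window lengths
  set L : ℕ → ℝ := fun k => v k - α k with hL
  have hLnn : ∀ k, 0 ≤ L k := fun k => sub_nonneg.2 ((hαβ k).trans (hβv k))
  have hLle : ∀ k, L k ≤ b - a := fun k => sub_le_sub (hvb k) (hαa k)
  have hIooIcc : ∀ k, Ioo (α k) (v k) ⊆ Icc a b := fun k t ht =>
    ⟨(hαa k).trans ht.1.le, ht.2.le.trans (hvb k)⟩
  have hsums := sum_length_le hab hIooIcc (fun k => (hαβ k).trans (hβv k)) hmult
  have hLsummable : Summable L :=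
    summable_of_sum_range_le hLnn (fun m' => hsums (Finset.range m'))
  -- comparison
  set C1 : ℝ := M ^ δ * (b - a) ^ ((n:ℝ) * δ - 1) with hC1
  have hC10 : 0 ≤ C1 := mul_nonneg (Real.rpow_nonneg hM0 δ)
    (Real.rpow_nonneg (by linarith) _)
  have hgoodpow : ∀ k, v k < b → m k ^ δ ≤ C1 * L k := by
    intro k hk
    have h1 : m k ^ δ ≤ (M * L k ^ n) ^ δ :=
      Real.rpow_le_rpow (hm0 k) (hgood k hk) hδ.le
    have h2 : (M * L k ^ n) ^ δ = M ^ δ * (L k) ^ ((n:ℝ) * δ) := by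
      rw [Real.mul_rpow hM0 (pow_nonneg (hLnn k) n)]
      congr 1
      rw [← Real.rpow_natCast (L k) n, ← Real.rpow_mul (hLnn k)]
    have h3 : (L k) ^ ((n:ℝ) * δ) ≤ (b - a) ^ ((n:ℝ) * δ - 1) * L k := by
      rcases eq_or_lt_of_le (hLnn k) with h0 | h0
      · rw [← h0, Real.zero_rpow (by nlinarith)]
        simp
      · have heq : (L k) ^ ((n:ℝ) * δ) = (L k) ^ ((n:ℝ) * δ - 1) * L k := by
          calc (L k) ^ ((n:ℝ) * δ) = (L k) ^ (((n:ℝ) * δ - 1) + 1) := by norm_num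
            _ = (L k) ^ ((n:ℝ) * δ - 1) * (L k) ^ (1:ℝ) := Real.rpow_add h0 _ _
            _ = (L k) ^ ((n:ℝ) * δ - 1) * L k := by rw [Real.rpow_one]
        rw [heq]
        apply mul_le_mul_of_nonneg_right _ (hLnn k)
        exact Real.rpow_le_rpow (hLnn k) (hLle k) (by linarith)
    calc m k ^ δ ≤ M ^ δ * (L k) ^ ((n:ℝ) * δ) := h1.trans_eq h2
      _ ≤ M ^ δ * ((b - a) ^ ((n:ℝ) * δ - 1) * L k) :=
          mul_le_mul_of_nonneg_left h3 (Real.rpow_nonneg hM0 δ)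
      _ = C1 * L k := by rw [hC1]; ring
  set p : ℕ → ℝ := fun k => if v k = b then C₀ ^ δ else 0 with hp
  have hpsummable : Summable p := by
    apply summable_of_ne_finset_zero (s := hbadfin.toFinset)
    intro k hk
    rw [hp]
    simp only [Set.Finite.mem_toFinset, Set.mem_setOf_eq] at hk
    exact if_neg hk
  have hbound : ∀ k, m k ^ δ ≤ C1 * L k + p k := by
    intro k
    by_cases hk : v k = b
    · have h1 : m k ^ δ ≤ C₀ ^ δ := Real.rpow_le_rpow (hm0 k) (hmC₀ k) hδ.le
      have h2 : 0 ≤ C1 * L k := mul_nonneg hC10 (hLnn k)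
      simp only [hp, if_pos hk]
      linarith
    · have h1 := hgoodpow k (lt_of_le_of_ne (hvb k) hk)
      simp only [hp, if_neg hk]
      linarith
  exact Summable.of_nonneg_of_le (fun k => Real.rpow_nonneg (hm0 k) δ) hbound
    ((hLsummable.mul_left C1).add hpsummable)
end

section
/- Let φ ∈ C^∞[a,b] and for k ∈ ℤ set E_k = {t ∈ [a,b] : 2^{-k-1} ≤ |φ(t)| ≤ 2^{-k}}. Then there exist intervals I_{k,1},…,I_{k,N_k} ⊆ [a,b] such that E_k ⊆ ⋃_j I_{k,j}, 2^{-k-2} ≤ |φ(t)| ≤ 2^{-k+1} for all t ∈ I_{k,j}, and for every δ > 0 there is a constant C_δ (independent of k) with N_k ≤ C_δ 2^{δk}. -/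
open Set

lemma consec_lt {f : ℕ → ℝ} {N : ℕ} (h : ∀ i, i + 1 ≤ N → f i < f (i+1)) :
    ∀ p q, p < q → q ≤ N → f p < f q := by
  intro p q hpq hq
  induction q with
  | zero => omega
  | succ q ih =>
    rcases Nat.lt_or_ge p q with h' | h'
    · exact (ih h' (by omega)).trans (h q hq)
    · have : p = q := by omega
      subst this; exact h p hq

lemma iterDeriv_interior (f : ℝ → ℝ) (a b x : ℝ) (n : ℕ) (hx : x ∈ Ioo a b) :
    iteratedDerivWithin n f (Icc a b) x = iteratedDeriv n f x := by
  rw [← iteratedDerivWithin_univ, iteratedDerivWithin_eq_iteratedFDerivWithin,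
    iteratedDerivWithin_eq_iteratedFDerivWithin,
    iteratedFDerivWithin_congr_set (t := univ) (Filter.eventuallyEq_univ.2 (Icc_mem_nhds hx.1 hx.2))]

/-- Inner alternation lemma: points strictly inside `Ioo A B`. -/
lemma alt_big (d : ℕ) : ∀ (A B : ℝ) (g : ℝ → ℝ), ContDiffOn ℝ (⊤ : ℕ∞) g (Ioo A B) →
    ∀ (h ℓ e : ℝ) (x : ℕ → ℝ), 0 < h → 0 < ℓ → (e = 1 ∨ e = -1) →
    (∀ i, i + 1 ≤ d → x i < x (i+1)) →
    (∀ i, i ≤ d → x i ∈ Ioo A B) →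
    x d - x 0 ≤ ℓ →
    (∀ i, i ≤ d → h ≤ e * (-1)^i * g (x i)) →
    ∃ ξ ∈ Ioo A B, 2^d * h / ℓ^d ≤ |iteratedDeriv d g ξ| := by
  induction d with
  | zero =>
    intro A B g hg h ℓ e x hh hℓ he hcons hmem hspan halt
    refine ⟨x 0, hmem 0 le_rfl, ?_⟩
    have h0 := halt 0 le_rfl
    have habs : h ≤ |g (x 0)| := by
      rcases he with rfl | rfl
      · simpa using h0.trans (le_abs_self _)
      · have : h ≤ -(g (x 0)) := by linarith [h0]
        exact this.trans (neg_le_abs _)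
    simpa [iteratedDeriv_zero] using habs
  | succ d ih =>
    intro A B g hg h ℓ e x hh hℓ he hcons hmem hspan halt
    have hmono : ∀ p q, p < q → q ≤ d + 1 → x p < x q := consec_lt hcons
    have hdiff : DifferentiableOn ℝ g (Ioo A B) := hg.differentiableOn (by simp)
    have hmvt : ∀ i, ∃ y, i ≤ d → y ∈ Ioo (x i) (x (i+1)) ∧
        deriv g y = (g (x (i+1)) - g (x i)) / (x (i+1) - x i) := by
      intro i
      by_cases hi : i ≤ d
      · have hxi := hmem i (by omega)
        have hxi1 := hmem (i+1) (by omega)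
        have hlt : x i < x (i+1) := hcons i (by omega)
        have hsub : Icc (x i) (x (i+1)) ⊆ Ioo A B := fun z hz =>
          ⟨lt_of_lt_of_le hxi.1 hz.1, lt_of_le_of_lt hz.2 hxi1.2⟩
        obtain ⟨y, hy, hy'⟩ := exists_deriv_eq_slope g hlt ((hg.continuousOn).mono hsub)
          (hdiff.mono (fun z hz => hsub ⟨hz.1.le, hz.2.le⟩))
        exact ⟨y, fun _ => ⟨hy, hy'⟩⟩
      · exact ⟨0, fun h' => absurd h' hi⟩
    choose y hy using hmvt
    have h2ℓ : (0:ℝ) < 2 * h / ℓ := by positivity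
    have hgd : ContDiffOn ℝ (⊤ : ℕ∞) (deriv g) (Ioo A B) :=
      hg.deriv_of_isOpen isOpen_Ioo (by simp)
    have hyc : ∀ i, i + 1 ≤ d → y i < y (i+1) := fun i hi =>
      ((hy i (by omega)).1.2).trans ((hy (i+1) (by omega)).1.1)
    have hym : ∀ i, i ≤ d → y i ∈ Ioo A B := fun i hi => by
      have h1 := (hy i hi).1
      exact ⟨(hmem i (by omega)).1.trans h1.1, h1.2.trans (hmem (i+1) (by omega)).2⟩
    have hyspan : y d - y 0 ≤ ℓ := by
      have h0 := (hy 0 (by omega)).1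
      have hd' := (hy d le_rfl).1
      have hx0 : x 0 < x (d+1) := hmono 0 (d+1) (by omega) le_rfl
      nlinarith [h0.1, hd'.2, hspan]
    have hyalt : ∀ i, i ≤ d → 2*h/ℓ ≤ (-e) * (-1)^i * deriv g (y i) := by
      intro i hi
      have hyi := hy i hi
      have hΔ : (0:ℝ) < x (i+1) - x i := by linarith [hcons i (by omega)]
      have hΔℓ : x (i+1) - x i ≤ ℓ := by
        have l1 : x 0 ≤ x i := by
          rcases Nat.eq_zero_or_pos i with rfl | hpos
          · exact le_rfl
          · exact (hmono 0 i hpos (by omega)).le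
        have l2 : x (i+1) ≤ x (d+1) := by
          rcases Nat.lt_or_ge (i+1) (d+1) with h' | h'
          · exact (hmono (i+1) (d+1) h' le_rfl).le
          · have : i + 1 = d + 1 := by omega
            rw [this]
        linarith
      have ha1 := halt i (by omega)
      have ha2 := halt (i+1) (by omega)
      have hpow : (-1:ℝ)^(i+1) = -(-1:ℝ)^i := by ring
      rw [hpow] at ha2
      have key : 2*h ≤ (-e) * (-1)^i * (g (x (i+1)) - g (x i)) := by nlinarith [ha1, ha2]
      calc 2*h/ℓ ≤ ((-e) * (-1)^i * (g (x (i+1)) - g (x i))) / (x (i+1) - x i) :=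
            div_le_div₀ (by nlinarith) key hΔ hΔℓ
        _ = (-e) * (-1)^i * deriv g (y i) := by rw [hyi.2]; ring
    obtain ⟨ξ, hξ, hbound⟩ := ih A B (deriv g) hgd (2*h/ℓ) ℓ (-e) y h2ℓ hℓ
      (by rcases he with rfl | rfl
          · right; norm_num
          · left; norm_num)
      hyc hym hyspan hyalt
    refine ⟨ξ, hξ, ?_⟩
    have heq : (2:ℝ)^(d+1) * h / ℓ^(d+1) = 2^d * (2*h/ℓ) / ℓ^d := by
      field_simp; ring
    rw [heq, iteratedDeriv_succ']
    exact hbound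

/-- Outer alternation lemma: `d+2` alternation points in `Icc A B`, smooth on `Icc A B`,
gives a point in the open interval where the `(d+1)`-st derivative is large. -/
lemma alt_big' (d : ℕ) (A B : ℝ) (g : ℝ → ℝ) (hg : ContDiffOn ℝ (⊤ : ℕ∞) g (Icc A B))
    (h ℓ e : ℝ) (x : ℕ → ℝ) (hh : 0 < h) (hℓ : 0 < ℓ) (he : e = 1 ∨ e = -1)
    (hcons : ∀ i, i + 1 ≤ d + 1 → x i < x (i+1))
    (hmem : ∀ i, i ≤ d + 1 → x i ∈ Icc A B)
    (hspan : x (d+1) - x 0 ≤ ℓ)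
    (halt : ∀ i, i ≤ d + 1 → h ≤ e * (-1)^i * g (x i)) :
    ∃ ξ ∈ Ioo A B, 2^(d+1) * h / ℓ^(d+1) ≤ |iteratedDeriv (d+1) g ξ| := by
  have hmono : ∀ p q, p < q → q ≤ d + 1 → x p < x q := consec_lt hcons
  have hAB : A < B := lt_of_lt_of_le (lt_of_le_of_lt (hmem 0 (by omega)).1
    (hmono 0 (d+1) (by omega) le_rfl)) (hmem (d+1) le_rfl).2
  have hdiff : DifferentiableOn ℝ g (Ioo A B) :=
    (hg.mono Ioo_subset_Icc_self).differentiableOn (by simp)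
  have hmvt : ∀ i, ∃ y, i ≤ d → y ∈ Ioo (x i) (x (i+1)) ∧
      deriv g y = (g (x (i+1)) - g (x i)) / (x (i+1) - x i) := by
    intro i
    by_cases hi : i ≤ d
    · have hxi := hmem i (by omega)
      have hxi1 := hmem (i+1) (by omega)
      have hlt : x i < x (i+1) := hcons i (by omega)
      have hsub : Icc (x i) (x (i+1)) ⊆ Icc A B := fun z hz =>
        ⟨hxi.1.trans hz.1, hz.2.trans hxi1.2⟩
      have hsubo : Ioo (x i) (x (i+1)) ⊆ Ioo A B := fun z hz =>
        ⟨lt_of_le_of_lt hxi.1 hz.1, lt_of_lt_of_le hz.2 hxi1.2⟩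
      obtain ⟨y, hy, hy'⟩ := exists_deriv_eq_slope g hlt ((hg.continuousOn).mono hsub)
        (hdiff.mono hsubo)
      exact ⟨y, fun _ => ⟨hy, hy'⟩⟩
    · exact ⟨0, fun h' => absurd h' hi⟩
  choose y hy using hmvt
  have h2ℓ : (0:ℝ) < 2 * h / ℓ := by positivity
  have hgd : ContDiffOn ℝ (⊤ : ℕ∞) (deriv g) (Ioo A B) :=
    (hg.mono Ioo_subset_Icc_self).deriv_of_isOpen isOpen_Ioo (by simp)
  have hyc : ∀ i, i + 1 ≤ d → y i < y (i+1) := fun i hi =>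
    ((hy i (by omega)).1.2).trans ((hy (i+1) (by omega)).1.1)
  have hym : ∀ i, i ≤ d → y i ∈ Ioo A B := fun i hi => by
    have h1 := (hy i hi).1
    exact ⟨lt_of_le_of_lt (hmem i (by omega)).1 h1.1,
      lt_of_lt_of_le h1.2 (hmem (i+1) (by omega)).2⟩
  have hyspan : y d - y 0 ≤ ℓ := by
    have h0 := (hy 0 (by omega)).1
    have hd' := (hy d le_rfl).1
    have hx0 : x 0 < x (d+1) := hmono 0 (d+1) (by omega) le_rfl
    nlinarith [h0.1, hd'.2, hspan]
  have hyalt : ∀ i, i ≤ d → 2*h/ℓ ≤ (-e) * (-1)^i * deriv g (y i) := by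
    intro i hi
    have hyi := hy i hi
    have hΔ : (0:ℝ) < x (i+1) - x i := by linarith [hcons i (by omega)]
    have hΔℓ : x (i+1) - x i ≤ ℓ := by
      have l1 : x 0 ≤ x i := by
        rcases Nat.eq_zero_or_pos i with rfl | hpos
        · exact le_rfl
        · exact (hmono 0 i hpos (by omega)).le
      have l2 : x (i+1) ≤ x (d+1) := by
        rcases Nat.lt_or_ge (i+1) (d+1) with h' | h'
        · exact (hmono (i+1) (d+1) h' le_rfl).le
        · have : i + 1 = d + 1 := by omega
          rw [this]
      linarith
    have ha1 := halt i (by omega)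
    have ha2 := halt (i+1) (by omega)
    have hpow : (-1:ℝ)^(i+1) = -(-1:ℝ)^i := by ring
    rw [hpow] at ha2
    have key : 2*h ≤ (-e) * (-1)^i * (g (x (i+1)) - g (x i)) := by nlinarith [ha1, ha2]
    calc 2*h/ℓ ≤ ((-e) * (-1)^i * (g (x (i+1)) - g (x i))) / (x (i+1) - x i) :=
          div_le_div₀ (by nlinarith) key hΔ hΔℓ
      _ = (-e) * (-1)^i * deriv g (y i) := by rw [hyi.2]; ring
  obtain ⟨ξ, hξ, hbound⟩ := alt_big d A B (deriv g) hgd (2*h/ℓ) ℓ (-e) y h2ℓ hℓ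
    (by rcases he with rfl | rfl
        · right; norm_num
        · left; norm_num)
    hyc hym hyspan hyalt
  refine ⟨ξ, hξ, ?_⟩
  have heq : (2:ℝ)^(d+1) * h / ℓ^(d+1) = 2^d * (2*h/ℓ) / ℓ^d := by
    field_simp; ring
  rw [heq, iteratedDeriv_succ']
  exact hbound

lemma nat_div_bound (n m : ℕ) (hm : 0 < m) (hn : 1 ≤ n) :
    n ≤ m * ((n-1)/m) + m := by
  have e1 := Nat.div_add_mod (n-1) m
  have e2 : (n-1) % m < m := Nat.mod_lt _ hm
  have e3 : n - 1 < m * ((n-1)/m) + m := by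
    conv_lhs => rw [← e1]
    exact Nat.add_lt_add_left e2 _
  have e4 := Nat.succ_le_of_lt e3
  rwa [← Nat.succ_pred_eq_of_pos hn]

/-- Counting lemma: an alternating sequence of `n` points has length controlled by the
sup of the `(d+1)`-st derivative. -/
lemma count_alt (d : ℕ) (A B : ℝ) (hAB : A ≤ B) (g : ℝ → ℝ)
    (hg : ContDiffOn ℝ (⊤ : ℕ∞) g (Icc A B)) (M h e : ℝ)
    (hM : ∀ ξ ∈ Ioo A B, |iteratedDeriv (d+1) g ξ| ≤ M) (hM0 : 0 < M) (hh : 0 < h)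
    (he : e = 1 ∨ e = -1) (n : ℕ) (w : ℕ → ℝ)
    (hcons : ∀ i, i + 2 ≤ n → w i < w (i+1))
    (hmem : ∀ i, i + 1 ≤ n → w i ∈ Icc A B)
    (halt : ∀ i, i + 1 ≤ n → h ≤ e * (-1)^i * g (w i)) :
    (n : ℝ) ≤ (d+1) * ((B - A) / (2 * (h/M) ^ (1/(d+1:ℝ)))) + (d+1) + 1 := by
  set ρ : ℝ := 2 * (h/M) ^ (1/(d+1:ℝ)) with hρdef
  have hhM : (0:ℝ) < h/M := div_pos hh hM0
  have hρ : 0 < ρ := by positivity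
  have hBA0 : (0:ℝ) ≤ B - A := by linarith
  have hcastm : (((d+1:ℕ)):ℝ) = (d:ℝ) + 1 := by push_cast; ring
  have hρm : ρ ^ (d+1) = 2^(d+1) * (h/M) := by
    rw [hρdef, mul_pow, ← Real.rpow_natCast ((h/M) ^ (1/(d+1:ℝ))) (d+1), ← Real.rpow_mul hhM.le,
      hcastm, one_div, inv_mul_cancel₀ (by positivity : (d:ℝ) + 1 ≠ 0), Real.rpow_one]
  rcases Nat.lt_or_ge n (d+2) with hn | hn
  · have h1 : (n:ℝ) ≤ (d:ℝ) + 1 := by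
      have hle : n ≤ d+1 := by omega
      calc (n:ℝ) ≤ ((d+1:ℕ):ℝ) := by exact_mod_cast hle
        _ = (d:ℝ) + 1 := hcastm
    have h2 : (0:ℝ) ≤ ((d:ℝ)+1) * ((B-A)/ρ) := by positivity
    nlinarith [h1, h2]
  have hwmono : ∀ p q, p < q → q + 1 ≤ n → w p < w q := by
    intro p q hpq hq
    exact consec_lt (N := n - 1) (fun i hi => hcons i (by omega)) p q hpq (by omega)
  have hwin : ∀ j, j + (d+1) + 1 ≤ n → ρ ≤ w (j+(d+1)) - w j := by
    intro j hj
    have hspan0 : w j < w (j+(d+1)) := hwmono j (j+(d+1)) (by omega) (by omega)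
    set ℓ := w (j+(d+1)) - w j with hℓdef
    have hℓ : 0 < ℓ := by linarith
    obtain ⟨ξ, hξ, hbig⟩ := alt_big' d A B g hg h ℓ (e * (-1)^j) (fun i => w (j+i)) hh hℓ
      (by rcases Nat.even_or_odd j with hj' | hj'
          · rw [hj'.neg_one_pow]; rcases he with rfl | rfl
            · left; norm_num
            · right; norm_num
          · rw [hj'.neg_one_pow]; rcases he with rfl | rfl
            · right; norm_num
            · left; norm_num)
      (fun i hi => by
        have := hcons (j+i) (by omega)
        simpa [Nat.add_assoc] using this)
      (fun i hi => hmem (j+i) (by omega))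
      (by simp [hℓdef])
      (fun i hi => by
        have := halt (j+i) (by omega)
        have hpow : e * (-1:ℝ)^(j+i) = (e * (-1)^j) * (-1)^i := by rw [pow_add]; ring
        rw [hpow] at this
        exact this)
    have hle : (2:ℝ)^(d+1) * h / ℓ^(d+1) ≤ M := le_trans hbig (hM ξ hξ)
    have hle2 : (2:ℝ)^(d+1) * h ≤ M * ℓ^(d+1) := (div_le_iff₀ (by positivity)).1 hle
    have h1 : ρ^(d+1) ≤ ℓ^(d+1) := by
      rw [hρm, show (2:ℝ)^(d+1)*(h/M) = (2^(d+1)*h)/M by ring, div_le_iff₀ hM0]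
      nlinarith [hle2]
    exact le_of_pow_le_pow_left₀ (by omega) hℓ.le h1
  set q : ℕ := (n - 1) / (d+1) with hq
  have h0 : q * (d+1) ≤ n - 1 := by rw [hq]; exact Nat.div_mul_le_self (n-1) (d+1)
  have hqm : q * (d+1) + 1 ≤ n := by omega
  have htel : (q:ℝ) * ρ ≤ w (q*(d+1)) - w 0 := by
    have hterm : ∀ t ∈ Finset.range q, ρ ≤ w ((t+1)*(d+1)) - w (t*(d+1)) := by
      intro t ht
      have htq : t + 1 ≤ q := Finset.mem_range.mp ht
      have h2 : (t+1)*(d+1) = t*(d+1) + (d+1) := by ring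
      have h3 : (t+1)*(d+1) ≤ q*(d+1) := Nat.mul_le_mul_right (d+1) htq
      have h4 : t*(d+1) + (d+1) + 1 ≤ n := by
        calc t*(d+1) + (d+1) + 1 = (t+1)*(d+1) + 1 := by rw [h2]
          _ ≤ q*(d+1) + 1 := Nat.add_le_add_right h3 1
          _ ≤ n := hqm
      simpa [h2] using hwin (t*(d+1)) h4
    calc (q:ℝ) * ρ = ∑ _t ∈ Finset.range q, ρ := by
          rw [Finset.sum_const, Finset.card_range]; ring
      _ ≤ ∑ t ∈ Finset.range q, (w ((t+1)*(d+1)) - w (t*(d+1))) := Finset.sum_le_sum hterm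
      _ = w (q*(d+1)) - w 0 := by
          have := Finset.sum_range_sub (f := fun t => w (t*(d+1))) q
          simpa using this
  have hBA : w (q*(d+1)) - w 0 ≤ B - A := by
    have h1 := hmem (q*(d+1)) hqm
    have h2 := hmem 0 (by omega)
    linarith [h1.1, h1.2, h2.1, h2.2]
  have hqbound : (q:ℝ) ≤ (B - A)/ρ := by
    rw [le_div_iff₀ hρ]; linarith
  have hnq : n ≤ (d+1) * q + (d+1) := by
    have := nat_div_bound n (d+1) (by omega) (by omega)
    rwa [← hq] at this
  have hc1 : (n:ℝ) ≤ ((d:ℝ)+1)*(q:ℝ) + ((d:ℝ)+1) := by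
    have : (n:ℝ) ≤ ((d+1:ℕ):ℝ)*(q:ℝ) + ((d+1:ℕ):ℝ) := by exact_mod_cast hnq
    rwa [hcastm] at this
  have hd1 : (0:ℝ) < (d:ℝ)+1 := by positivity
  nlinarith [hc1, hqbound, hd1, hρ]

set_option maxHeartbeats 2000000 in
/-- for smooth `φ` on `[a,b]` and `E_k = {2^{-k-1} ≤ |φ| ≤ 2^{-k}}`, there are
intervals `I_{k,1}, …, I_{k,N_k} ⊆ [a,b]` covering `E_k`, on which `2^{-k-2} ≤ |φ| ≤ 2^{-k+1}`,
with `N_k ≤ C_δ 2^{δ k}` for every `δ > 0` (with `C_δ` independent of `k`). -/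
theorem cover_of_level_sets (a b : ℝ) (hab : a ≤ b) (φ : ℝ → ℝ)
    (hφ : ContDiffOn ℝ (⊤ : ℕ∞) φ (Set.Icc a b)) :
    ∃ (N : ℤ → ℕ) (I : (k : ℤ) → Fin (N k) → Set ℝ),
      (∀ k : ℤ, ∀ j, I k j ⊆ Set.Icc a b ∧ (I k j).OrdConnected) ∧
      (∀ k : ℤ, {t ∈ Set.Icc a b | (2:ℝ) ^ (-k - 1) ≤ |φ t| ∧ |φ t| ≤ (2:ℝ) ^ (-k)}
        ⊆ ⋃ j, I k j) ∧
      (∀ k : ℤ, ∀ j, ∀ t ∈ I k j, (2:ℝ) ^ (-k - 2) ≤ |φ t| ∧ |φ t| ≤ (2:ℝ) ^ (-k + 1)) ∧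
      (∀ δ : ℝ, 0 < δ → ∃ Cδ : ℝ, 0 < Cδ ∧ ∀ k : ℤ,
        (N k : ℝ) ≤ Cδ * (2:ℝ) ^ (δ * (k : ℝ))) := by
  classical
  obtain ⟨B0, hB0⟩ := isCompact_Icc.exists_bound_of_continuousOn hφ.continuousOn
  obtain ⟨nB, hnB⟩ : ∃ nB : ℕ, B0 < 2^nB := pow_unbounded_of_one_lt B0 one_lt_two
  set kmin : ℤ := -(nB:ℤ) with hkmin
  set E : ℤ → Set ℝ := fun k => {t ∈ Set.Icc a b | (2:ℝ)^(-k-1) ≤ |φ t| ∧ |φ t| ≤ (2:ℝ)^(-k)}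
    with hE
  set U : ℤ → Set ℝ := fun k => {t ∈ Set.Icc a b | (2:ℝ)^(-k-2) ≤ |φ t| ∧ |φ t| ≤ (2:ℝ)^(-k+1)}
    with hU
  set c : ℤ → ℝ := fun k => (2:ℝ)^(-2*k) with hc
  set G : ℤ → ℝ → ℝ := fun k t => (φ t^2 - c k/8) * (φ t^2 - 2*c k) with hG
  have hcpos : ∀ k, 0 < c k := fun k => zpow_pos two_pos _
  have hEU : ∀ k, E k ⊆ U k := by
    intro k t ht
    obtain ⟨h1, h2, h3⟩ := ht
    exact ⟨h1, le_trans (zpow_le_zpow_right₀ one_le_two (by omega)) h2,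
      le_trans h3 (zpow_le_zpow_right₀ one_le_two (by omega))⟩
  have hUIcc : ∀ k, U k ⊆ Set.Icc a b := fun k t ht => ht.1
  have hGsmooth : ∀ k, ContDiffOn ℝ (⊤ : ℕ∞) (G k) (Set.Icc a b) := by
    intro k
    exact ((hφ.pow 2).sub contDiffOn_const).mul ((hφ.pow 2).sub contDiffOn_const)
  -- squares of the thresholds
  have hzsq : ∀ m : ℤ, ((2:ℝ)^m)^(2:ℕ) = (2:ℝ)^(2*m) := fun m => by
    rw [← zpow_natCast ((2:ℝ)^m), ← zpow_mul, mul_comm]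
    norm_num
  have hsq1 : ∀ k : ℤ, ((2:ℝ)^(-k-1))^(2:ℕ) = c k/4 := by
    intro k
    rw [hzsq, show (2:ℤ)*(-k-1) = -2*k + -2 by ring, zpow_add₀ (two_ne_zero' ℝ)]
    simp only [hc]
    norm_num
    ring
  have hsq2 : ∀ k : ℤ, ((2:ℝ)^(-k))^(2:ℕ) = c k := by
    intro k
    rw [hzsq, show (2:ℤ)*(-k) = -2*k by ring]
  have hsq3 : ∀ k : ℤ, ((2:ℝ)^(-k-2))^(2:ℕ) = c k/16 := by
    intro k
    rw [hzsq, show (2:ℤ)*(-k-2) = -2*k + -4 by ring, zpow_add₀ (two_ne_zero' ℝ)]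
    simp only [hc]
    norm_num
    ring
  have hsq4 : ∀ k : ℤ, ((2:ℝ)^(-k+1))^(2:ℕ) = 4 * c k := by
    intro k
    rw [hzsq, show (2:ℤ)*(-k+1) = -2*k + 2 by ring, zpow_add₀ (two_ne_zero' ℝ)]
    simp only [hc]
    norm_num
    ring
  have hEG : ∀ k, ∀ t ∈ E k, G k t ≤ -((c k)^2/16) := by
    intro k t ht
    have ht' : t ∈ Set.Icc a b ∧ (2:ℝ)^(-k-1) ≤ |φ t| ∧ |φ t| ≤ (2:ℝ)^(-k) := ht
    obtain ⟨_, h1, h2⟩ := ht'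
    have hck := hcpos k
    have hp2a : c k/4 ≤ (φ t)^2 := by
      calc c k/4 = ((2:ℝ)^(-k-1))^(2:ℕ) := (hsq1 k).symm
        _ ≤ |φ t|^(2:ℕ) := pow_le_pow_left₀ (by positivity) h1 2
        _ = (φ t)^2 := sq_abs _
    have hp2b : (φ t)^2 ≤ c k := by
      calc (φ t)^2 = |φ t|^(2:ℕ) := (sq_abs _).symm
        _ ≤ ((2:ℝ)^(-k))^(2:ℕ) := pow_le_pow_left₀ (abs_nonneg _) h2 2
        _ = c k := hsq2 k
    show (φ t^2 - c k/8) * (φ t^2 - 2*c k) ≤ -((c k)^2/16)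
    nlinarith [mul_nonneg (by linarith : (0:ℝ) ≤ (φ t)^2 - c k/4)
        (by linarith : (0:ℝ) ≤ c k - (φ t)^2),
      mul_nonneg hck.le (by linarith : (0:ℝ) ≤ (φ t)^2 - c k/4)]
  have hSG : ∀ k, ∀ s ∈ Set.Icc a b, s ∉ U k → (c k)^2/16 ≤ G k s := by
    intro k s hs hsU
    have hck := hcpos k
    have hnot : ¬((2:ℝ)^(-k-2) ≤ |φ s| ∧ |φ s| ≤ (2:ℝ)^(-k+1)) := fun hcon => hsU ⟨hs, hcon⟩
    have hsq0 : (0:ℝ) ≤ (φ s)^2 := sq_nonneg _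
    show (c k)^2/16 ≤ (φ s^2 - c k/8) * (φ s^2 - 2*c k)
    rcases not_and_or.1 hnot with hlow | hhigh
    · push_neg at hlow
      have hp2 : (φ s)^2 < c k/16 := by
        calc (φ s)^2 = |φ s|^(2:ℕ) := (sq_abs _).symm
          _ < ((2:ℝ)^(-k-2))^(2:ℕ) := by
              apply pow_lt_pow_left₀ hlow (abs_nonneg _) (by norm_num)
          _ = c k/16 := hsq3 k
      nlinarith [mul_nonneg (by linarith : (0:ℝ) ≤ c k/16 - (φ s)^2)
          (by linarith : (0:ℝ) ≤ 2*c k - (φ s)^2),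
        mul_nonneg hck.le (by linarith : (0:ℝ) ≤ c k/16 - (φ s)^2)]
    · push_neg at hhigh
      have hp2 : 4 * c k < (φ s)^2 := by
        calc 4 * c k = ((2:ℝ)^(-k+1))^(2:ℕ) := (hsq4 k).symm
          _ < |φ s|^(2:ℕ) := by
              apply pow_lt_pow_left₀ hhigh (by positivity) (by norm_num)
          _ = (φ s)^2 := sq_abs _
      nlinarith [mul_nonneg (by linarith : (0:ℝ) ≤ (φ s)^2 - 4*c k) hsq0,
        mul_nonneg hck.le (by linarith : (0:ℝ) ≤ (φ s)^2 - 4*c k)]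
  have hEempty : ∀ k, k < kmin → E k = ∅ := by
    intro k hk
    rw [hkmin] at hk
    rw [Set.eq_empty_iff_forall_notMem]
    intro t ht
    have ht' : t ∈ Set.Icc a b ∧ (2:ℝ)^(-k-1) ≤ |φ t| ∧ |φ t| ≤ (2:ℝ)^(-k) := ht
    obtain ⟨hticc, h1, _⟩ := ht'
    have hb := hB0 t hticc
    rw [Real.norm_eq_abs] at hb
    have hlt : (2:ℝ)^(-k-1) < (2:ℝ)^((nB:ℤ)) := by
      calc (2:ℝ)^(-k-1) ≤ |φ t| := h1
        _ ≤ B0 := hb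
        _ < 2^nB := hnB
        _ = (2:ℝ)^((nB:ℤ)) := (zpow_natCast 2 nB).symm
    have := (zpow_lt_zpow_iff_right₀ one_lt_two).mp hlt
    omega
  have hM : ∀ d : ℕ, ∃ M : ℝ, 0 < M ∧ ∀ k, kmin ≤ k → ∀ ξ ∈ Ioo a b,
      |iteratedDeriv (d+1) (G k) ξ| ≤ M := by
    intro d
    rcases eq_or_lt_of_le hab with heq | hlt
    · exact ⟨1, one_pos, fun k hk ξ hξ => absurd hξ (by rw [← heq]; simp)⟩
    have huniq : UniqueDiffOn ℝ (Set.Icc a b) := uniqueDiffOn_Icc hlt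
    have hf4 : ContDiffOn ℝ (⊤ : ℕ∞) (fun t => φ t^4) (Set.Icc a b) := hφ.pow 4
    have hf2 : ContDiffOn ℝ (⊤ : ℕ∞) (fun t => φ t^2) (Set.Icc a b) := hφ.pow 2
    obtain ⟨K4, hK4⟩ := isCompact_Icc.exists_bound_of_continuousOn
      (hf4.continuousOn_iteratedDerivWithin (m := d+1) (by exact_mod_cast le_top) huniq)
    obtain ⟨K2, hK2⟩ := isCompact_Icc.exists_bound_of_continuousOn
      (hf2.continuousOn_iteratedDerivWithin (m := d+1) (by exact_mod_cast le_top) huniq)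
    set cM : ℝ := (2:ℝ)^(-2*kmin) with hcM
    have hcM0 : 0 < cM := zpow_pos two_pos _
    refine ⟨|K4| + 17*cM/8 * |K2| + 1, by positivity, ?_⟩
    intro k hk ξ hξ
    have hξI : ξ ∈ Set.Icc a b := Ioo_subset_Icc_self hξ
    have hck : c k ≤ cM := by
      rw [hcM]
      exact zpow_le_zpow_right₀ one_le_two (by omega)
    have hck0 := hcpos k
    -- rewrite the iterated derivative
    have hGeq : G k = fun t => (c k)^2/4 + ((fun z => φ z^4 - 17*(c k)/8 * φ z^2) t) := by
      funext t
      show (φ t^2 - c k/8) * (φ t^2 - 2*c k) = _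
      ring
    have hstep : iteratedDeriv (d+1) (G k) ξ =
        iteratedDerivWithin (d+1) (fun t => φ t^4) (Set.Icc a b) ξ
          - 17*(c k)/8 * iteratedDerivWithin (d+1) (fun t => φ t^2) (Set.Icc a b) ξ := by
      have hsplit : (fun z => φ z^4 - 17*(c k)/8 * φ z^2)
          = ((fun z => φ z^4) - (fun z => 17*(c k)/8 * φ z^2)) := rfl
      rw [← iterDeriv_interior (G k) a b ξ (d+1) hξ, hGeq,
        iteratedDerivWithin_const_add (Nat.succ_pos d), hsplit,
        iteratedDerivWithin_sub hξI huniq ((hf4.of_le (by exact_mod_cast le_top)).contDiffWithinAt hξI)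
          ((contDiffOn_const.mul (hf2.of_le (by exact_mod_cast le_top))).contDiffWithinAt hξI),
        iteratedDerivWithin_const_mul hξI huniq _ ((hf2.of_le (by exact_mod_cast le_top)).contDiffWithinAt hξI)]
    rw [hstep]
    have e4 := hK4 ξ hξI
    have e2 := hK2 ξ hξI
    rw [Real.norm_eq_abs] at e4 e2
    have habs : |iteratedDerivWithin (d+1) (fun t => φ t^4) (Set.Icc a b) ξ
        - 17*(c k)/8 * iteratedDerivWithin (d+1) (fun t => φ t^2) (Set.Icc a b) ξ|
        ≤ |iteratedDerivWithin (d+1) (fun t => φ t^4) (Set.Icc a b) ξ|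
          + 17*(c k)/8 * |iteratedDerivWithin (d+1) (fun t => φ t^2) (Set.Icc a b) ξ| := by
      rw [sub_eq_add_neg]
      refine (abs_add_le _ _).trans ?_
      rw [abs_neg, abs_mul, abs_of_nonneg (by positivity : (0:ℝ) ≤ 17*(c k)/8)]
    refine habs.trans ?_
    have t1 : |iteratedDerivWithin (d+1) (fun t => φ t^4) (Set.Icc a b) ξ| ≤ |K4| :=
      e4.trans (le_abs_self _)
    have t2 : 17*(c k)/8 * |iteratedDerivWithin (d+1) (fun t => φ t^2) (Set.Icc a b) ξ|
        ≤ 17*cM/8 * |K2| := by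
      apply mul_le_mul (by linarith) (e2.trans (le_abs_self _)) (abs_nonneg _) (by positivity)
    linarith
  choose Mf hMf0 hMfb using hM
  set comp : ℤ → ℝ → Set ℝ := fun k t => ordConnectedComponent (U k) t with hcomp
  set 𝒞 : ℤ → Set (Set ℝ) := fun k => comp k '' (E k) with h𝒞
  have KEY : ∀ (d:ℕ) (k:ℤ), kmin ≤ k → ∀ S : Set (Set ℝ), S ⊆ 𝒞 k → S.Finite →
      (S.ncard : ℝ) ≤ (d+1) * ((b - a) / (2 * ((c k)^2/16/(Mf d)) ^ (1/(d+1:ℝ)))) + (d+1) + 1 := by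
    intro d k hk S hS hSfin
    have hck := hcpos k
    have hh0 : (0:ℝ) < (c k)^2/16 := by positivity
    have hMd := hMf0 d
    have hrpos : (0:ℝ) < 2 * ((c k)^2/16/(Mf d)) ^ (1/(d+1:ℝ)) := by positivity
    have hfirst : (0:ℝ) ≤ ((d:ℝ)+1) * ((b - a) / (2 * ((c k)^2/16/(Mf d)) ^ (1/(d+1:ℝ)))) := by
      apply mul_nonneg (by positivity)
      apply div_nonneg (by linarith) hrpos.le
    set n := S.ncard with hn
    rcases Nat.lt_or_ge n 2 with hn2 | hn2
    · have hle2 : (n:ℝ) ≤ 2 := by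
        have : n ≤ 2 := by omega
        exact_mod_cast this
      have hd1 : (1:ℝ) ≤ (d:ℝ)+1 := by
        have := Nat.cast_nonneg (α := ℝ) d
        linarith
      linarith
    have hpickex : ∀ C ∈ S, ∃ t, t ∈ E k ∧ comp k t = C := by
      intro C hC
      obtain ⟨t, ht, rfl⟩ := hS hC
      exact ⟨t, ht, rfl⟩
    choose! pick hpick1 hpick2 using hpickex
    have hinj : Set.InjOn pick ↑hSfin.toFinset := by
      intro C hC C' hC' hpp
      rw [Finset.mem_coe, Set.Finite.mem_toFinset] at hC hC'
      rw [← hpick2 C hC, ← hpick2 C' hC', hpp]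
    set F : Finset ℝ := hSfin.toFinset.image pick with hF
    have hFcard : F.card = n := by
      rw [hF, Finset.card_image_of_injOn hinj, hn, Set.ncard_eq_toFinset_card _ hSfin]
    set z : ℕ → ℝ := fun i => if h : i < n then (F.orderIsoOfFin hFcard ⟨i, h⟩ : ℝ) else 0 with hz
    have hzmono : ∀ i j, i < j → j < n → z i < z j := by
      intro i j hij hj
      have hi : i < n := hij.trans hj
      simp only [hz, dif_pos hi, dif_pos hj]
      exact Subtype.coe_lt_coe.mpr ((F.orderIsoOfFin hFcard).strictMono
        (show (⟨i,hi⟩ : Fin n) < ⟨j,hj⟩ from hij))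
    have hzF : ∀ i, i < n → (z i) ∈ F := by
      intro i hi
      simp only [hz, dif_pos hi]
      exact Finset.coe_mem _
    have hzE : ∀ i, i < n → z i ∈ E k := by
      intro i hi
      obtain ⟨C, hC, hCz⟩ := Finset.mem_image.1 (hzF i hi)
      rw [Set.Finite.mem_toFinset] at hC
      rw [← hCz]
      exact hpick1 C hC
    have hzcompinj : ∀ i j, i < n → j < n → comp k (z i) = comp k (z j) → i = j := by
      intro i j hi hj hcij
      by_contra hne
      have hzz : z i ≠ z j := by
        rcases Nat.lt_or_ge i j with h' | h'
        · exact ne_of_lt (hzmono i j h' hj)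
        · have : j < i := by omega
          exact (ne_of_lt (hzmono j i this hi)).symm
      obtain ⟨C, hC, hCz⟩ := Finset.mem_image.1 (hzF i hi)
      obtain ⟨C', hC', hCz'⟩ := Finset.mem_image.1 (hzF j hj)
      rw [Set.Finite.mem_toFinset] at hC hC'
      have e1 : comp k (z i) = C := by rw [← hCz]; exact hpick2 C hC
      have e2 : comp k (z j) = C' := by rw [← hCz']; exact hpick2 C' hC'
      apply hzz
      rw [← hCz, ← hCz']
      rw [e1, e2] at hcij
      rw [hcij]
    have hbet0 : ∀ i, i + 2 ≤ n → ∃ s, z i < s ∧ s < z (i+1) ∧ s ∈ Set.Icc a b ∧ s ∉ U k := by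
      intro i hi
      have hzi : z i ∈ E k := hzE i (by omega)
      have hzi1 : z (i+1) ∈ E k := hzE (i+1) (by omega)
      have hzi' : z i ∈ Set.Icc a b ∧ (2:ℝ)^(-k-1) ≤ |φ (z i)| ∧ |φ (z i)| ≤ (2:ℝ)^(-k) := hzi
      have hzi1' : z (i+1) ∈ Set.Icc a b ∧ (2:ℝ)^(-k-1) ≤ |φ (z (i+1))| ∧
        |φ (z (i+1))| ≤ (2:ℝ)^(-k) := hzi1
      have hlt : z i < z (i+1) := hzmono i (i+1) (by omega) (by omega)
      by_contra hcon
      push_neg at hcon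
      have hsub : Set.uIcc (z i) (z (i+1)) ⊆ U k := by
        rw [Set.uIcc_of_le hlt.le]
        intro s hs
        rcases eq_or_lt_of_le hs.1 with he | hlt1
        · rw [← he]; exact hEU k hzi
        rcases eq_or_lt_of_le hs.2 with he | hlt2
        · rw [he]; exact hEU k hzi1
        have hsicc : s ∈ Set.Icc a b := ⟨hzi'.1.1.trans hs.1, hs.2.trans hzi1'.1.2⟩
        exact hcon s hlt1 hlt2 hsicc
      have hceq := ordConnectedComponent_eq hsub
      exact absurd (hzcompinj i (i+1) (by omega) (by omega) hceq) (by omega)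
    have hbet : ∀ i, ∃ s, i + 2 ≤ n → (z i < s ∧ s < z (i+1) ∧ s ∈ Set.Icc a b ∧ s ∉ U k) := by
      intro i
      by_cases hi : i + 2 ≤ n
      · obtain ⟨s, hs⟩ := hbet0 i hi
        exact ⟨s, fun _ => hs⟩
      · exact ⟨0, fun h' => absurd h' hi⟩
    choose sf hsf using hbet
    set w : ℕ → ℝ := fun i => if Even i then z (i/2) else sf (i/2) with hw
    have hwval : ∀ i, w i = if Even i then z (i/2) else sf (i/2) := fun i => rfl
    have hwcons : ∀ i, i + 2 ≤ 2*n-1 → w i < w (i+1) := by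
      intro i hi
      rcases Nat.even_or_odd i with he | ho
      · obtain ⟨r, hr⟩ := he
        have he' : Even i := ⟨r, hr⟩
        have hodd : ¬ Even (i+1) := by
          rw [Nat.even_add_one]
          simpa using he'
        have e1 : w i = z r := by
          rw [hwval, if_pos he', show i/2 = r by omega]
        have e2 : w (i+1) = sf r := by
          rw [hwval, if_neg hodd, show (i+1)/2 = r by omega]
        rw [e1, e2]
        exact (hsf r (by omega)).1
      · obtain ⟨r, hr⟩ := ho
        have hodd : ¬ Even i := by
          rw [hr, Nat.even_add_one]
          simp [Nat.even_mul]
        have heven : Even (i+1) := by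
          rw [Nat.even_add_one]
          exact hodd
        have e1 : w i = sf r := by
          rw [hwval, if_neg hodd, show i/2 = r by omega]
        have e2 : w (i+1) = z (r+1) := by
          rw [hwval, if_pos heven, show (i+1)/2 = r+1 by omega]
        rw [e1, e2]
        exact (hsf r (by omega)).2.1
    have hwmem : ∀ i, i + 1 ≤ 2*n-1 → w i ∈ Set.Icc a b := by
      intro i hi
      rcases Nat.even_or_odd i with he | ho
      · obtain ⟨r, hr⟩ := he
        have he' : Even i := ⟨r, hr⟩
        have e1 : w i = z r := by
          rw [hwval, if_pos he', show i/2 = r by omega]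
        rw [e1]
        exact (hzE r (by omega)).1
      · obtain ⟨r, hr⟩ := ho
        have hodd : ¬ Even i := by
          rw [hr, Nat.even_add_one]
          simp [Nat.even_mul]
        have e1 : w i = sf r := by
          rw [hwval, if_neg hodd, show i/2 = r by omega]
        rw [e1]
        exact (hsf r (by omega)).2.2.1
    have hwalt : ∀ i, i + 1 ≤ 2*n-1 → (c k)^2/16 ≤ (-1) * (-1)^i * G k (w i) := by
      intro i hi
      rcases Nat.even_or_odd i with he | ho
      · obtain ⟨r, hr⟩ := he
        have he' : Even i := ⟨r, hr⟩
        have hp : (-1:ℝ)^i = 1 := Even.neg_one_pow he'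
        have e1 : w i = z r := by
          rw [hwval, if_pos he', show i/2 = r by omega]
        rw [e1, hp]
        have hEGr := hEG k (z r) (hzE r (by omega))
        nlinarith [hEGr]
      · obtain ⟨r, hr⟩ := ho
        have hodd : ¬ Even i := by
          rw [hr, Nat.even_add_one]
          simp [Nat.even_mul]
        have hp : (-1:ℝ)^i = -1 := Odd.neg_one_pow ⟨r, hr⟩
        have e1 : w i = sf r := by
          rw [hwval, if_neg hodd, show i/2 = r by omega]
        rw [e1, hp]
        have hsr := hsf r (by omega)
        have hSGr := hSG k (sf r) hsr.2.2.1 hsr.2.2.2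
        nlinarith [hSGr]
    have hcount := count_alt d a b hab (G k) (hGsmooth k) (Mf d) ((c k)^2/16) (-1)
      (hMfb d k hk) (hMf0 d) hh0 (Or.inr rfl) (2*n-1) w hwcons hwmem hwalt
    have hnle : (n:ℝ) ≤ ((2*n-1:ℕ):ℝ) := by
      have : n ≤ 2*n-1 := by omega
      exact_mod_cast this
    linarith
  have hfin : ∀ k, (𝒞 k).Finite := by
    intro k
    rcases lt_or_ge k kmin with hk | hk
    · simp only [h𝒞]
      rw [hEempty k hk]
      simp
    · by_contra hinf
      have hinf' : (𝒞 k).Infinite := hinf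
      obtain ⟨Bd, hBd⟩ : ∃ Bd : ℝ, ∀ S : Set (Set ℝ), S ⊆ 𝒞 k → S.Finite →
          (S.ncard:ℝ) ≤ Bd := ⟨_, KEY 0 k hk⟩
      obtain ⟨S, hS, hSfin, hScard⟩ := hinf'.exists_subset_ncard_eq (⌈Bd⌉₊+1)
      have hle := hBd S hS hSfin
      rw [hScard] at hle
      push_cast at hle
      linarith [Nat.le_ceil Bd]
  refine ⟨fun k => (hfin k).toFinset.card,
    fun k j => (((hfin k).toFinset.equivFin.symm j : (hfin k).toFinset) : Set ℝ), ?_, ?_, ?_, ?_⟩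
  · intro k j
    beta_reduce
    have hmem : (((hfin k).toFinset.equivFin.symm j : (hfin k).toFinset) : Set ℝ) ∈ 𝒞 k :=
      (Set.Finite.mem_toFinset _).1 (Finset.coe_mem _)
    obtain ⟨t, ht, heq⟩ := hmem
    rw [← heq]
    exact ⟨Subset.trans ordConnectedComponent_subset (hUIcc k), inferInstance⟩
  · intro k t ht
    beta_reduce
    have htE : t ∈ E k := ht
    have hmem : comp k t ∈ 𝒞 k := mem_image_of_mem _ htE
    refine mem_iUnion.2 ⟨(hfin k).toFinset.equivFin ⟨comp k t, (Set.Finite.mem_toFinset _).2 hmem⟩, ?_⟩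
    simp only [Equiv.symm_apply_apply]
    exact self_mem_ordConnectedComponent.2 (hEU k htE)
  · intro k j t ht
    beta_reduce at ht ⊢
    have hmem : (((hfin k).toFinset.equivFin.symm j : (hfin k).toFinset) : Set ℝ) ∈ 𝒞 k :=
      (Set.Finite.mem_toFinset _).1 (Finset.coe_mem _)
    obtain ⟨s, hs, heq⟩ := hmem
    rw [← heq] at ht
    have htU : t ∈ U k := ordConnectedComponent_subset ht
    exact ⟨htU.2.1, htU.2.2⟩
  · intro δ hδ
    set d : ℕ := ⌈(4:ℝ)/δ⌉₊ with hd
    have hDm : (0:ℝ) < (d:ℝ)+1 := by positivity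
    have h4δ : 4 ≤ δ * ((d:ℝ)+1) := by
      have h1 : (4:ℝ)/δ ≤ (d:ℝ) := Nat.le_ceil _
      have h2 : (4:ℝ) ≤ (d:ℝ) * δ := (div_le_iff₀ hδ).1 h1
      nlinarith [hδ]
    set P : ℝ := 16 * Mf d with hP
    have hPpos : 0 < P := by have := hMf0 d; positivity
    set PP : ℝ := P ^ (1/((d:ℝ)+1)) with hPP
    have hPPpos : 0 < PP := Real.rpow_pos_of_pos hPpos _
    set A0 : ℝ := ((d:ℝ)+1)*(b-a)*PP/2 with hA0
    have hA0nn : 0 ≤ A0 := by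
      have hba : (0:ℝ) ≤ b - a := by linarith
      rw [hA0]
      positivity
    set Z : ℝ := (2:ℝ)^(-(δ*(kmin:ℝ))) with hZ
    have hZpos : 0 < Z := Real.rpow_pos_of_pos two_pos _
    refine ⟨(A0 + ((d:ℝ)+1) + 1) * (1 + Z) + 1, by positivity, ?_⟩
    intro k
    beta_reduce
    have hYpos : (0:ℝ) < (2:ℝ)^(δ*(k:ℝ)) := Real.rpow_pos_of_pos two_pos _
    set Y : ℝ := (2:ℝ)^(δ*(k:ℝ)) with hY
    rcases lt_or_ge k kmin with hk | hk
    · have h0 : (hfin k).toFinset.card = 0 := by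
        rw [Finset.card_eq_zero, Set.Finite.toFinset_eq_empty]
        simp only [h𝒞]
        rw [hEempty k hk]
        simp
      rw [h0]
      push_cast
      positivity
    · -- main case
      have hkey := KEY d k hk (𝒞 k) Subset.rfl (hfin k)
      rw [Set.ncard_eq_toFinset_card _ (hfin k)] at hkey
      have hck := hcpos k
      have hMd := hMf0 d
      set T : ℝ := (2:ℝ)^((-4*(k:ℝ))/((d:ℝ)+1)) with hTdef
      set T' : ℝ := (2:ℝ)^((4*(k:ℝ))/((d:ℝ)+1)) with hT'def
      have hTpos : 0 < T := Real.rpow_pos_of_pos two_pos _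
      have hT'pos : 0 < T' := Real.rpow_pos_of_pos two_pos _
      have hTT' : T * T' = 1 := by
        rw [hTdef, hT'def, ← Real.rpow_add two_pos,
          show (-4*(k:ℝ))/((d:ℝ)+1) + (4*(k:ℝ))/((d:ℝ)+1) = 0 by ring, Real.rpow_zero]
      have hcsq : (c k)^2 = (2:ℝ)^((-4*k : ℤ)) := by
        simp only [hc]
        rw [← zpow_natCast ((2:ℝ)^(-2*k)), ← zpow_mul,
          show (-2*k)*((2:ℕ):ℤ) = -4*k by push_cast; ring]
      have hX : ((c k)^2/16/(Mf d)) ^ (1/((d:ℝ)+1)) = T * PP⁻¹ := by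
        have hb : (c k)^2/16/(Mf d) = (2:ℝ)^((-4*k:ℤ)) * P⁻¹ := by
          rw [hcsq, hP, div_div, div_eq_mul_inv]
        rw [hb, Real.mul_rpow (by positivity) (by positivity)]
        congr 1
        · rw [← Real.rpow_intCast (2:ℝ) (-4*k), ← Real.rpow_mul (by norm_num : (0:ℝ) ≤ 2),
            hTdef]
          congr 1
          push_cast
          ring
        · rw [Real.inv_rpow hPpos.le, ← hPP]
      have heq1 : ((d:ℝ)+1) * ((b-a)/(2*(T*PP⁻¹))) = A0 * T' := by
        have hXinv : (2 * (T * PP⁻¹))⁻¹ = T' * PP / 2 := by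
          apply inv_eq_of_mul_eq_one_right
          field_simp
          linear_combination hTT'
        calc ((d:ℝ)+1) * ((b-a)/(2*(T*PP⁻¹))) = ((d:ℝ)+1)*(b-a) * (2*(T*PP⁻¹))⁻¹ := by ring
          _ = ((d:ℝ)+1)*(b-a) * (T'*PP/2) := by rw [hXinv]
          _ = A0 * T' := by rw [hA0]; ring
      rw [hX, heq1] at hkey
      have hA0Dm : (0:ℝ) ≤ A0 + ((d:ℝ)+1) + 1 := by positivity
      rcases le_or_gt 0 k with hk0 | hk0
      · have hk0' : (0:ℝ) ≤ (k:ℝ) := by exact_mod_cast hk0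
        have hexp : (4*(k:ℝ))/((d:ℝ)+1) ≤ δ*(k:ℝ) := by
          rw [div_le_iff₀ hDm]
          nlinarith [h4δ, hk0']
        have hT'Y : T' ≤ Y := by
          rw [hT'def, hY]
          exact Real.rpow_le_rpow_of_exponent_le one_le_two hexp
        have hY1 : (1:ℝ) ≤ Y := by
          rw [hY]
          calc (1:ℝ) = (2:ℝ)^(0:ℝ) := (Real.rpow_zero 2).symm
            _ ≤ (2:ℝ)^(δ*(k:ℝ)) := Real.rpow_le_rpow_of_exponent_le one_le_two (by positivity)
        have s1 : A0*T' ≤ A0*Y := mul_le_mul_of_nonneg_left hT'Y hA0nn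
        nlinarith [s1, hY1, hYpos, hZpos, hA0nn, hDm, mul_nonneg hA0Dm hZpos.le,
          mul_nonneg (mul_nonneg hA0Dm hZpos.le) hYpos.le]
      · have hk0' : (k:ℝ) ≤ 0 := by exact_mod_cast hk0.le
        have hT'1 : T' ≤ 1 := by
          rw [hT'def]
          apply Real.rpow_le_one_of_one_le_of_nonpos one_le_two
          apply div_nonpos_of_nonpos_of_nonneg (by linarith) hDm.le
        have hZY : 1 ≤ Z * Y := by
          rw [hZ, hY, ← Real.rpow_add two_pos]
          calc (1:ℝ) = (2:ℝ)^(0:ℝ) := (Real.rpow_zero 2).symm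
            _ ≤ _ := by
                apply Real.rpow_le_rpow_of_exponent_le one_le_two
                have hkk : (kmin:ℝ) ≤ (k:ℝ) := by exact_mod_cast hk
                nlinarith [hδ, hkk]
        have s1 : A0*T' ≤ A0 := by nlinarith [mul_le_mul_of_nonneg_left hT'1 hA0nn]
        have s2 : A0 + ((d:ℝ)+1) + 1 ≤ (A0 + ((d:ℝ)+1) + 1) * (Z*Y) :=
          le_mul_of_one_le_right hA0Dm hZY
        nlinarith [s1, s2, hYpos, hZpos, mul_nonneg hA0Dm hYpos.le]
end

section
/- Let n ≥ 2, let φ be n-times continuously differentiable on an interval I, and let γ(t) = (t, t², …, t^{n-1}, φ(t)). Then det[γ′(t), γ″(t), …, γ^{(n)}(t)] = c_n · φ^{(n)}(t) for all t ∈ I, where c_n = ∏_{k=1}^{n-1} k! is a positive constant depending only on n. -/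
/-! The first `n - 1` coordinates of `γ` are the powers `t ^ (i + 1)`, whose `(j + 1)`-th
derivative vanishes for `j > i` and equals `(i + 1)!` for `j = i`. So the matrix `(γ_i^{(j+1)}(t))`
is lower triangular, with diagonal `1!, …, (n-1)!, φ^{(n)}(t)`. -/

open Matrix

section Pow

variable {𝕜 : Type*} [NontriviallyNormedField 𝕜] {s : Set 𝕜} {x : 𝕜}

theorem iteratedDerivWithin_pow_self (hs : UniqueDiffOn 𝕜 s) (hx : x ∈ s) (m : ℕ) :
    iteratedDerivWithin m (· ^ m) s x = m.factorial := by
  simp [iteratedDerivWithin_pow hx hs, Nat.descFactorial_self]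

theorem iteratedDerivWithin_pow_of_lt (hs : UniqueDiffOn 𝕜 s) (hx : x ∈ s) {m k : ℕ}
    (hmk : m < k) : iteratedDerivWithin k (· ^ m) s x = 0 := by
  simp [iteratedDerivWithin_pow hx hs, Nat.descFactorial_eq_zero_iff_lt.mpr hmk]

end Pow

section SimpleCurve

variable {m : ℕ} {I : Set ℝ} {φ : ℝ → ℝ} {γ : ℝ → Fin (m + 1) → ℝ}

theorem simpleCurve_coord_of_lt
    (hγ : ∀ t i, γ t i = if (i : ℕ) < m then t ^ ((i : ℕ) + 1) else φ t)
    {i : Fin (m + 1)} (hi : (i : ℕ) < m) :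
    (fun s => γ s i) = (· ^ ((i : ℕ) + 1)) := by
  funext s
  rw [hγ, if_pos hi]

theorem simpleCurve_coord_last
    (hγ : ∀ t i, γ t i = if (i : ℕ) < m then t ^ ((i : ℕ) + 1) else φ t) :
    (fun s => γ s (Fin.last m)) = φ := by
  funext s
  rw [hγ, if_neg (by simp)]

theorem simpleCurve_derivMatrix_isLowerTriangular
    (hγ : ∀ t i, γ t i = if (i : ℕ) < m then t ^ ((i : ℕ) + 1) else φ t)
    (hI : UniqueDiffOn ℝ I) {t : ℝ} (ht : t ∈ I) :
    (of fun i j : Fin (m + 1) =>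
      iteratedDerivWithin ((j : ℕ) + 1) (fun s => γ s i) I t).IsLowerTriangular := by
  intro i j hji
  have hij : (i : ℕ) < j := hji
  rw [of_apply, simpleCurve_coord_of_lt hγ (by omega),
    iteratedDerivWithin_pow_of_lt hI ht (by omega)]

theorem simpleCurve_det_derivMatrix
    (hγ : ∀ t i, γ t i = if (i : ℕ) < m then t ^ ((i : ℕ) + 1) else φ t)
    (hI : UniqueDiffOn ℝ I) {t : ℝ} (ht : t ∈ I) :
    (of fun i j : Fin (m + 1) =>
      iteratedDerivWithin ((j : ℕ) + 1) (fun s => γ s i) I t).det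
      = Nat.superFactorial m * iteratedDerivWithin (m + 1) φ I t := by
  rw [det_of_isLowerTriangular _ (simpleCurve_derivMatrix_isLowerTriangular hγ hI ht),
    Fin.prod_univ_castSucc, ← Nat.prod_range_factorial_succ, ← Fin.prod_univ_eq_prod_range]
  simp only [of_apply, Fin.val_last, simpleCurve_coord_last hγ]
  push_cast
  congr 1
  refine Finset.prod_congr rfl fun i _ => ?_
  rw [simpleCurve_coord_of_lt hγ (by simp), Fin.val_castSucc, iteratedDerivWithin_pow_self hI ht]

end SimpleCurve

theorem torsion_simple_curve_general (n : ℕ) (hn : 2 ≤ n) (I : Set ℝ)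
    (hIu : UniqueDiffOn ℝ I) (φ : ℝ → ℝ)
    (γ : ℝ → Fin n → ℝ)
    (hγ : ∀ t i, γ t i = if (i : ℕ) < n - 1 then t ^ ((i : ℕ) + 1) else φ t) :
    ∀ t ∈ I,
      Matrix.det (Matrix.of fun i j : Fin n =>
          iteratedDerivWithin ((j : ℕ) + 1) (fun s => γ s i) I t)
        = (∏ k ∈ Finset.Icc 1 (n - 1), (Nat.factorial k) : ℕ) *
            iteratedDerivWithin n φ I t := by
  intro t ht
  obtain ⟨m, rfl⟩ : ∃ m, n = m + 1 := ⟨n - 1, by omega⟩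
  rw [simpleCurve_det_derivMatrix hγ hIu ht, Nat.add_sub_cancel, Nat.prod_Icc_factorial]

/-- for the simple curve `γ(t) = (t, t², …, t^{n-1}, φ(t))` with `φ` `n`-times
continuously differentiable on an interval `I`, one has
`det[γ'(t), …, γ^{(n)}(t)] = (∏_{k=1}^{n-1} k!) ⬝ φ^{(n)}(t)` for all `t ∈ I`. -/
theorem torsion_simple_curve (n : ℕ) (hn : 2 ≤ n) (I : Set ℝ) (hI : I.OrdConnected)
    (hIu : UniqueDiffOn ℝ I) (φ : ℝ → ℝ) (hφ : ContDiffOn ℝ n φ I)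
    (γ : ℝ → Fin n → ℝ)
    (hγ : ∀ t i, γ t i = if (i : ℕ) < n - 1 then t ^ ((i : ℕ) + 1) else φ t) :
    ∀ t ∈ I,
      Matrix.det (Matrix.of fun i j : Fin n =>
          iteratedDerivWithin ((j : ℕ) + 1) (fun s => γ s i) I t)
        = (∏ k ∈ Finset.Icc 1 (n - 1), (Nat.factorial k) : ℕ) *
            iteratedDerivWithin n φ I t :=
  torsion_simple_curve_general n hn I hIu φ γ hγ
end

section
/- Let α, β > 0 with β > α, n ∈ ℕ, and φ(t) = e^{-t^{-α}} sin(t^{-β}) on (0,1]. Then the n-th derivative has the form φ^{(n)}(t) = e^{-t^{-α}} ( P(t^{-1}) sin(t^{-β}) + Q(t^{-1}) cos(t^{-β}) ), where P and Q are finite linear combinations of real powers of their argument, and the maximum of the top exponents of P and Q equals n(β+1). -/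
/-!
Write `φ^{(n)} = e^{-t^{-α}} (P_n(t) sin t^{-β} + Q_n(t) cos t^{-β})` with `P_n, Q_n` finite sums
of powers `t^{-γ}`. Differentiating multiplies by `α t^{-α-1}` (from the exponential) or by
`∓β t^{-β-1}` (from the oscillation, swapping `sin` and `cos`), or differentiates `P_n, Q_n`
termwise; each raises the exponent `γ` by `α + 1`, `β + 1` or `1` respectively. Since
`0 < α < β`, only the oscillating factor reaches the new top exponent `D + β + 1`, where the
leading coefficients become `β q_D` and `-β p_D`; so the top exponent grows by exactly `β + 1`
at each step.
-/

open Set Real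

noncomputable def negRpowSum (t : ℝ) : (ℝ →₀ ℝ) →ₗ[ℝ] ℝ :=
  Finsupp.linearCombination ℝ fun γ => t ^ (-γ)

noncomputable def shiftMul (δ : ℝ) (w : ℝ → ℝ) (c : ℝ →₀ ℝ) : ℝ →₀ ℝ :=
  c.sum fun γ a => Finsupp.single (γ + δ) (w γ * a)

theorem shiftMul_apply (δ : ℝ) (w : ℝ → ℝ) (c : ℝ →₀ ℝ) (γ : ℝ) :
    shiftMul δ w c γ = w (γ - δ) * c (γ - δ) := by
  rw [shiftMul, Finsupp.sum_apply, Finsupp.sum, Finset.sum_eq_single (γ - δ)]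
  · simp
  · intro x _ hx
    rw [Finsupp.single_eq_of_ne]
    contrapose! hx
    linarith
  · intro h
    simp [Finsupp.notMem_support_iff.mp h]

theorem negRpowSum_shiftMul (t δ : ℝ) (w : ℝ → ℝ) (c : ℝ →₀ ℝ) :
    negRpowSum t (shiftMul δ w c) = c.sum fun γ a => w γ * a * t ^ (-(γ + δ)) := by
  simp only [negRpowSum, shiftMul, map_finsuppSum, Finsupp.linearCombination_single, smul_eq_mul]

theorem negRpowSum_shiftMul_const {t : ℝ} (ht : 0 < t) (δ k : ℝ) (c : ℝ →₀ ℝ) :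
    negRpowSum t (shiftMul δ (fun _ => k) c) = k * t ^ (-δ) * negRpowSum t c := by
  rw [negRpowSum_shiftMul, negRpowSum, Finsupp.linearCombination_apply, Finsupp.mul_sum]
  refine Finsupp.sum_congr fun γ _ => ?_
  rw [neg_add, rpow_add ht, smul_eq_mul]
  ring

theorem hasDerivAt_negRpowSum (c : ℝ →₀ ℝ) {t : ℝ} (ht : t ≠ 0) :
    HasDerivAt (fun u => negRpowSum u c) (negRpowSum t (shiftMul 1 Neg.neg c)) t := by
  rw [negRpowSum_shiftMul]
  simp only [negRpowSum, Finsupp.linearCombination_apply, Finsupp.sum, smul_eq_mul]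
  refine HasDerivAt.fun_sum fun γ _ => ?_
  refine ((hasDerivAt_rpow_const (p := -γ) (Or.inl ht)).const_mul (c γ)).congr_deriv ?_
  rw [neg_add']
  ring

noncomputable def oscForm (α β : ℝ) (p : (ℝ →₀ ℝ) × (ℝ →₀ ℝ)) (t : ℝ) : ℝ :=
  exp (-(t ^ (-α))) * (negRpowSum t p.1 * sin (t ^ (-β)) + negRpowSum t p.2 * cos (t ^ (-β)))

noncomputable def oscStep (α β : ℝ) (p : (ℝ →₀ ℝ) × (ℝ →₀ ℝ)) : (ℝ →₀ ℝ) × (ℝ →₀ ℝ) :=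
  (shiftMul (α + 1) (fun _ => α) p.1 + shiftMul 1 Neg.neg p.1 + shiftMul (β + 1) (fun _ => β) p.2,
   shiftMul (α + 1) (fun _ => α) p.2 + shiftMul 1 Neg.neg p.2 - shiftMul (β + 1) (fun _ => β) p.1)

theorem hasDerivAt_oscForm (α β : ℝ) (p : (ℝ →₀ ℝ) × (ℝ →₀ ℝ)) {t : ℝ} (ht : 0 < t) :
    HasDerivAt (oscForm α β p) (oscForm α β (oscStep α β p) t) t := by
  have hpow (γ : ℝ) : HasDerivAt (fun u : ℝ => u ^ (-γ)) (-γ * t ^ (-γ - 1)) t :=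
    hasDerivAt_rpow_const (Or.inl ht.ne')
  have hP := hasDerivAt_negRpowSum p.1 ht.ne'
  have hQ := hasDerivAt_negRpowSum p.2 ht.ne'
  refine ((hpow α).neg.exp.mul ((hP.mul (hpow β).sin).add (hQ.mul (hpow β).cos))).congr_deriv ?_
  simp only [oscForm, oscStep, map_add, map_sub, negRpowSum_shiftMul_const ht, neg_add',
    Pi.add_apply, Pi.mul_apply, Pi.neg_apply]
  ring

noncomputable def oscCoeffs (α β : ℝ) (n : ℕ) : (ℝ →₀ ℝ) × (ℝ →₀ ℝ) :=
  (oscStep α β)^[n] (Finsupp.single 0 1, 0)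

theorem oscCoeffs_succ (α β : ℝ) (n : ℕ) :
    oscCoeffs α β (n + 1) = oscStep α β (oscCoeffs α β n) :=
  Function.iterate_succ_apply' _ _ _

theorem iteratedDeriv_eq_oscForm {α β : ℝ} {φ : ℝ → ℝ}
    (hφ : ∀ t, φ t = exp (-(t ^ (-α))) * sin (t ^ (-β))) (n : ℕ) :
    EqOn (iteratedDeriv n φ) (oscForm α β (oscCoeffs α β n)) (Ioi 0) := by
  induction n with
  | zero =>
    intro t _
    simp [oscCoeffs, oscForm, negRpowSum, hφ]
  | succ n ih =>
    intro t ht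
    rw [iteratedDeriv_succ, (ih.eventuallyEq_of_mem (isOpen_Ioi.mem_nhds ht)).deriv_eq,
      (hasDerivAt_oscForm α β _ ht).deriv, oscCoeffs_succ]

def IsTopExponent (p : (ℝ →₀ ℝ) × (ℝ →₀ ℝ)) (D : ℝ) : Prop :=
  (p.1 D ≠ 0 ∨ p.2 D ≠ 0) ∧ ∀ γ, D < γ → p.1 γ = 0 ∧ p.2 γ = 0

theorem isTopExponent_oscStep {α β D : ℝ} {p : (ℝ →₀ ℝ) × (ℝ →₀ ℝ)} (hβ : 0 < β) (hαβ : α < β)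
    (h : IsTopExponent p D) : IsTopExponent (oscStep α β p) (D + (β + 1)) := by
  obtain ⟨hne, hzero⟩ := h
  refine ⟨?_, fun γ hγ => ?_⟩
  · have h1 := hzero (D + (β + 1) - (α + 1)) (by linarith)
    have h2 := hzero (D + (β + 1) - 1) (by linarith)
    have hfst : (oscStep α β p).1 (D + (β + 1)) = β * p.2 D := by
      simp [oscStep, shiftMul_apply, h1, h2]
    have hsnd : (oscStep α β p).2 (D + (β + 1)) = -(β * p.1 D) := by
      simp [oscStep, shiftMul_apply, h1, h2]
    rw [hfst, hsnd, neg_ne_zero]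
    exact hne.symm.imp (mul_ne_zero hβ.ne') (mul_ne_zero hβ.ne')
  · have h1 := hzero (γ - (α + 1)) (by linarith)
    have h2 := hzero (γ - 1) (by linarith)
    have h3 := hzero (γ - (β + 1)) (by linarith)
    simp [oscStep, shiftMul_apply, h1, h2, h3]

theorem isTopExponent_oscCoeffs {α β : ℝ} (hβ : 0 < β) (hαβ : α < β) (n : ℕ) :
    IsTopExponent (oscCoeffs α β n) (n * (β + 1)) := by
  induction n with
  | zero =>
    refine ⟨by simp [oscCoeffs], fun γ hγ => ?_⟩
    rw [Nat.cast_zero, zero_mul] at hγ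
    simp [oscCoeffs, hγ.ne]
  | succ n ih =>
    rw [oscCoeffs_succ, Nat.cast_succ, add_one_mul]
    exact isTopExponent_oscStep hβ hαβ ih

theorem negRpowSum_eq_sum_inv_rpow {t : ℝ} (ht : 0 < t) {c : ℝ →₀ ℝ} {s : Finset ℝ}
    (hs : c.support ⊆ s) : negRpowSum t c = ∑ γ ∈ s, c γ * t⁻¹ ^ γ := by
  rw [negRpowSum, Finsupp.linearCombination_apply, Finsupp.sum_of_support_subset c hs _ (by simp)]
  simp only [smul_eq_mul, inv_rpow ht.le, rpow_neg ht.le]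

/-- for `β > α > 0` and `φ(t) = e^{-t^{-α}} sin(t^{-β})`, the `n`-th derivative
has the form `φ^{(n)}(t) = e^{-t^{-α}} (P(t⁻¹) sin(t^{-β}) + Q(t⁻¹) cos(t^{-β}))` on `(0,1]`,
where `P, Q` are finite linear combinations of real powers, and the maximal exponent appearing
(with a nonzero coefficient) in `P` or `Q` equals `n(β+1)`. -/
theorem oscillating_derivative_form (α β : ℝ) (hα : 0 < α) (hβ : α < β) (n : ℕ)
    (φ : ℝ → ℝ) (hφ : ∀ t, φ t = Real.exp (-(t ^ (-α))) * Real.sin (t ^ (-β))) :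
    ∃ (s : Finset ℝ) (c d : ℝ → ℝ),
      (∀ t ∈ Set.Ioc (0:ℝ) 1,
        iteratedDeriv n φ t =
          Real.exp (-(t ^ (-α))) *
            ((∑ γ ∈ s, c γ * (t⁻¹) ^ γ) * Real.sin (t ^ (-β)) +
             (∑ γ ∈ s, d γ * (t⁻¹) ^ γ) * Real.cos (t ^ (-β)))) ∧
      (n * (β + 1) : ℝ) ∈ s ∧
      (c (n * (β + 1)) ≠ 0 ∨ d (n * (β + 1)) ≠ 0) ∧
      (∀ γ ∈ s, (c γ ≠ 0 ∨ d γ ≠ 0) → γ ≤ n * (β + 1)) := by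
  set p := oscCoeffs α β n
  obtain ⟨hne, hzero⟩ := isTopExponent_oscCoeffs (hα.trans hβ) hβ n
  refine ⟨p.1.support ∪ p.2.support, p.1, p.2, fun t ht => ?_, ?_, hne, fun γ _ hγ => ?_⟩
  · rw [iteratedDeriv_eq_oscForm hφ n ht.1, oscForm,
      negRpowSum_eq_sum_inv_rpow ht.1 Finset.subset_union_left,
      negRpowSum_eq_sum_inv_rpow ht.1 Finset.subset_union_right]
  · simpa only [Finset.mem_union, Finsupp.mem_support_iff] using hne
  · by_contra! hlt
    have := hzero γ hlt
    tauto
end
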